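/- arXiv:2207.00539 — 7 statements merged into one kernel-verified Lean document; each statement's English description precedes it below -/
import Mathlib

section
/- Define sequences h, t, p : ℕ → ℝ by: h_ℓ = (1/2)^{(ℓ+3)/2} if ℓ is odd and ℓ ≥ 3, and h_ℓ = 0 otherwise; t_2 = 1/2, t_ℓ = (1/2)^ℓ for ℓ ≥ 3, and t_ℓ = 0 for ℓ ≤ 1; and p_ℓ = h_ℓ + ∑_{i=2}^{ℓ} t_i * p_{ℓ-i} (a well-founded strong recursion since t_0 = t_1 = 0, with p_0 = 0). Then for every real x with |x| < 1, the series ∑_{ℓ=0}^∞ p_ℓ * x^ℓ converges and equals x^3*(x-2) / ((x^2-2)*(x^3 - 4*x^2 - 4*x + 8)). -/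
/-!
With `P, H, T` the generating functions of `p, h, t`, the Cauchy product turns the recursion
`p = t * p + h` into `P = T P + H`, so `P = H / (1 - T)`. Here `H = x³ / (4 (2 - x²))` and
`T = x² / 2 + x³ / (4 (2 - x))` are geometric series, and `1 - T` is the cubic of the statement
over `4 (2 - x)`. The Cauchy product converges absolutely because `|p ℓ| ≤ 1`, by induction from
`|h ℓ| ≤ 1/4` and `∑ t = T(1) = 3/4`.
-/

open Finset

theorem sum_Icc_two_eq_sum_range {M : Type*} [AddCommMonoid M] {f : ℕ → M} (hf0 : f 0 = 0)
    (hf1 : f 1 = 0) (n : ℕ) : ∑ i ∈ Icc 2 n, f i = ∑ i ∈ range (n + 1), f i := by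
  refine sum_subset (fun i hi => by simp only [mem_Icc, mem_range] at hi ⊢; omega)
    fun i hi hi2 => ?_
  obtain rfl | rfl : i = 0 ∨ i = 1 := by simp only [mem_Icc, mem_range] at hi hi2; omega
  exacts [hf0, hf1]

theorem hasSum_div_one_sub_of_eq_add_conv {𝕜 : Type*} [NormedField 𝕜] [CompleteSpace 𝕜]
    {h t p : ℕ → 𝕜} {x H T : 𝕜}
    (hp : ∀ n, p n = h n + ∑ k ∈ range (n + 1), t k * p (n - k))
    (hH : HasSum (fun n => h n * x ^ n) H) (hT : HasSum (fun n => t n * x ^ n) T) (hT1 : T ≠ 1)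
    (ht : Summable fun n => ‖t n * x ^ n‖) (hps : Summable fun n => ‖p n * x ^ n‖) :
    HasSum (fun n => p n * x ^ n) (H / (1 - T)) := by
  set P := ∑' n, p n * x ^ n
  have hP : HasSum (fun n => p n * x ^ n) P := hps.of_norm.hasSum
  have hconv := hasSum_sum_range_mul_of_summable_norm ht hps
  rw [hT.tsum_eq] at hconv
  have hfix : HasSum (fun n => p n * x ^ n) (H + T * P) := by
    convert hH.add hconv using 1
    funext n
    rw [hp n, add_mul, sum_mul]
    congr 1
    refine sum_congr rfl fun k hk => ?_
    rw [← pow_mul_pow_sub x (mem_range_succ_iff.mp hk)]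
    ring
  have hPeq : P = H + T * P := hP.unique hfix
  have hsolve : P = H / (1 - T) := by
    rw [eq_div_iff (sub_ne_zero.mpr hT1.symm)]
    linear_combination hPeq
  exact hsolve ▸ hP

theorem abs_le_one_of_eq_add_conv {h t p : ℕ → ℝ} {s : ℝ} (ht0 : t 0 = 0) (ht : ∀ n, 0 ≤ t n)
    (hts : ∀ n, ∑ k ∈ range (n + 1), t k ≤ s) (hh : ∀ n, |h n| ≤ 1 - s)
    (hp : ∀ n, p n = h n + ∑ k ∈ range (n + 1), t k * p (n - k)) (n : ℕ) : |p n| ≤ 1 := by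
  induction n using Nat.strong_induction_on with
  | _ n ih =>
    have hterm : ∀ k ∈ range (n + 1), |t k * p (n - k)| ≤ t k := by
      intro k hk
      rcases Nat.eq_zero_or_pos k with rfl | hk0
      · simp [ht0]
      rw [abs_mul, abs_of_nonneg (ht k)]
      exact mul_le_of_le_one_right (ht k) (ih _ (by have := mem_range.mp hk; omega))
    calc |p n| ≤ |h n| + ∑ k ∈ range (n + 1), |t k * p (n - k)| := by
          rw [hp n]; exact (abs_add_le _ _).trans (add_le_add_right (abs_sum_le_sum_abs _ _) _)
      _ ≤ (1 - s) + s := add_le_add (hh n) ((sum_le_sum hterm).trans (hts n))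
      _ = 1 := by ring

theorem summable_norm_mul_pow_of_abs_le_one {a : ℕ → ℝ} (ha : ∀ n, |a n| ≤ 1) {x : ℝ}
    (hx : |x| < 1) : Summable fun n => ‖a n * x ^ n‖ :=
  summable_norm_mul_geometric_of_norm_lt_one' (k := 0) hx <|
    Asymptotics.isBigO_of_le _ fun n => by simpa using ha n

noncomputable def hookProb (ℓ : ℕ) : ℝ :=
  if Odd ℓ ∧ 3 ≤ ℓ then (1 / 2 : ℝ) ^ ((ℓ + 3) / 2) else 0

theorem abs_hookProb_le (n : ℕ) : |hookProb n| ≤ 1 / 4 := by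
  unfold hookProb
  split_ifs with hn
  · rw [abs_of_pos (by positivity)]
    calc (1 / 2 : ℝ) ^ ((n + 3) / 2) ≤ (1 / 2) ^ 2 :=
          pow_le_pow_of_le_one (by norm_num) (by norm_num) (by omega)
      _ = 1 / 4 := by norm_num
  · norm_num

noncomputable def twistProb : ℕ → ℝ
  | 0 => 0
  | 1 => 0
  | 2 => 1 / 2
  | n + 3 => (1 / 2) ^ (n + 3)

theorem eq_twistProb {t : ℕ → ℝ} (ht0 : ∀ ℓ ≤ 1, t ℓ = 0) (ht2 : t 2 = 1 / 2)
    (ht3 : ∀ ℓ : ℕ, 3 ≤ ℓ → t ℓ = (1 / 2 : ℝ) ^ ℓ) : t = twistProb := by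
  funext ℓ
  match ℓ with
  | 0 => exact ht0 0 zero_le_one
  | 1 => exact ht0 1 le_rfl
  | 2 => exact ht2
  | n + 3 => exact ht3 (n + 3) (by omega)

theorem twistProb_nonneg (n : ℕ) : 0 ≤ twistProb n := by
  rcases n with _ | _ | _ | n <;> simp [twistProb]

theorem hasSum_twistProb_mul_pow {x : ℝ} (hx : |x| < 2) :
    HasSum (fun n => twistProb n * x ^ n) (x ^ 2 / 2 + x ^ 3 / (4 * (2 - x))) := by
  have hx2 : x < 2 := (abs_lt.mp hx).2
  have hr : ‖x / 2‖ < 1 := by rw [norm_div, Real.norm_two, Real.norm_eq_abs]; linarith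
  have hshift :
      (fun n => twistProb (n + 3) * x ^ (n + 3)) = fun n => (x / 2) ^ 3 * (x / 2) ^ n := by
    funext n
    simp only [twistProb]
    ring
  have hvalue : x ^ 2 / 2 + x ^ 3 / (4 * (2 - x)) - ∑ i ∈ range 3, twistProb i * x ^ i
      = (x / 2) ^ 3 * (1 - x / 2)⁻¹ := by
    simp only [sum_range_succ, sum_range_zero, twistProb]
    field_simp [show 2 - x ≠ 0 by linarith]
    ring
  rw [← hasSum_nat_add_iff' 3, hshift, hvalue]
  exact (hasSum_geometric_of_norm_lt_one hr).mul_left _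

theorem hasSum_hookProb_mul_pow {x : ℝ} (hx : x ^ 2 < 2) :
    HasSum (fun n => hookProb n * x ^ n) (x ^ 3 / (4 * (2 - x ^ 2))) := by
  have hr : ‖x ^ 2 / 2‖ < 1 := by
    rw [norm_div, Real.norm_two, Real.norm_eq_abs, abs_of_nonneg (sq_nonneg x)]; linarith
  have hinj : Function.Injective fun k : ℕ => 2 * k + 3 := fun a b hab => by simp only at hab; omega
  have hodd : ∀ ℓ ∉ Set.range fun k : ℕ => 2 * k + 3, hookProb ℓ * x ^ ℓ = 0 := by
    intro ℓ hℓ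
    rw [hookProb, if_neg, zero_mul]
    rintro ⟨⟨k, rfl⟩, h3⟩
    exact hℓ ⟨k - 1, by dsimp only; omega⟩
  have hsub : (fun ℓ => hookProb ℓ * x ^ ℓ) ∘ (fun k : ℕ => 2 * k + 3)
      = fun k => x ^ 3 / 8 * (x ^ 2 / 2) ^ k := by
    funext k
    simp only [Function.comp_apply, hookProb]
    rw [if_pos ⟨⟨k + 1, by ring⟩, by omega⟩, show (2 * k + 3 + 3) / 2 = k + 3 by omega]
    ring
  have hvalue : x ^ 3 / (4 * (2 - x ^ 2)) = x ^ 3 / 8 * (1 - x ^ 2 / 2)⁻¹ := by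
    field_simp [show 2 - x ^ 2 ≠ 0 by linarith]
    ring
  rw [← hinj.hasSum_iff hodd, hsub, hvalue]
  exact (hasSum_geometric_of_norm_lt_one hr).mul_left _

theorem hasSum_twistProb : HasSum twistProb (3 / 4) := by
  convert hasSum_twistProb_mul_pow (x := 1) (by norm_num) using 1 <;> norm_num

theorem abs_twistProb_le_one (n : ℕ) : |twistProb n| ≤ 1 := by
  rw [abs_of_nonneg (twistProb_nonneg n)]
  exact (le_hasSum hasSum_twistProb n fun j _ => twistProb_nonneg j).trans (by norm_num)

theorem one_sub_twist_gf_eq {x : ℝ} (hx : x ≠ 2) :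
    1 - (x ^ 2 / 2 + x ^ 3 / (4 * (2 - x))) = (x ^ 3 - 4 * x ^ 2 - 4 * x + 8) / (4 * (2 - x)) := by
  field_simp [sub_ne_zero.mpr hx.symm]
  ring

theorem trapping_cubic_pos {x : ℝ} (hx : |x| < 1) : 0 < x ^ 3 - 4 * x ^ 2 - 4 * x + 8 := by
  obtain ⟨hx₁, hx₂⟩ := abs_lt.mp hx
  nlinarith [mul_pos (by linarith : (0:ℝ) < 1 - x) (by nlinarith : (0:ℝ) < 7 + 3 * x - x ^ 2)]

theorem twist_gf_lt_one {x : ℝ} (hx : |x| < 1) : x ^ 2 / 2 + x ^ 3 / (4 * (2 - x)) < 1 := by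
  have hx2 : x < 2 := by linarith [le_abs_self x]
  rw [← sub_pos, one_sub_twist_gf_eq hx2.ne]
  exact div_pos (trapping_cubic_pos hx) (by linarith)

theorem trapping_gf_eq_div {x : ℝ} (hx : |x| < 1) :
    x ^ 3 * (x - 2) / ((x ^ 2 - 2) * (x ^ 3 - 4 * x ^ 2 - 4 * x + 8))
      = x ^ 3 / (4 * (2 - x ^ 2)) / (1 - (x ^ 2 / 2 + x ^ 3 / (4 * (2 - x)))) := by
  obtain ⟨hx₁, hx₂⟩ := abs_lt.mp hx
  have hx22 : 0 < 2 - x ^ 2 := by nlinarith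
  rw [one_sub_twist_gf_eq (by linarith : x < 2).ne, div_div_div_eq,
    div_eq_div_iff (mul_ne_zero (by linarith) (trapping_cubic_pos hx).ne')
      (mul_pos (mul_pos four_pos hx22) (trapping_cubic_pos hx)).ne']
  ring

/-- The trapping-length probabilities `p` on the one-sided square ladder, defined by the
convolution recursion `p = t * p + h` with hook probabilities `h` and twist probabilities `t`,
have ordinary generating function `x^3 (x-2)/((x^2-2)(x^3-4x^2-4x+8))` for `|x| < 1`. -/
theorem trapping_length_gf_one_sided_square (h t p : ℕ → ℝ)
    (hh : ∀ ℓ : ℕ, h ℓ = if Odd ℓ ∧ 3 ≤ ℓ then (1 / 2 : ℝ) ^ ((ℓ + 3) / 2) else 0)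
    (ht0 : ∀ ℓ ≤ 1, t ℓ = 0)
    (ht2 : t 2 = 1 / 2)
    (ht3 : ∀ ℓ : ℕ, 3 ≤ ℓ → t ℓ = (1 / 2 : ℝ) ^ ℓ)
    (hp : ∀ ℓ : ℕ, p ℓ = h ℓ + ∑ i ∈ Finset.Icc 2 ℓ, t i * p (ℓ - i))
    (x : ℝ) (hx : |x| < 1) :
    HasSum (fun ℓ : ℕ => p ℓ * x ^ ℓ)
      (x ^ 3 * (x - 2) / ((x ^ 2 - 2) * (x ^ 3 - 4 * x ^ 2 - 4 * x + 8))) := by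
  obtain rfl : h = hookProb := funext hh
  obtain rfl := eq_twistProb ht0 ht2 ht3
  replace hp (n : ℕ) : p n = hookProb n + ∑ k ∈ range (n + 1), twistProb k * p (n - k) := by
    rw [hp n, sum_Icc_two_eq_sum_range (by simp [twistProb]) (by simp [twistProb])]
  have hpb : ∀ n, |p n| ≤ 1 := abs_le_one_of_eq_add_conv rfl twistProb_nonneg
    (fun n => sum_le_hasSum _ (fun i _ => twistProb_nonneg i) hasSum_twistProb)
    (fun n => (abs_hookProb_le n).trans_eq (by norm_num)) hp
  obtain ⟨hx₁, hx₂⟩ := abs_lt.mp hx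
  rw [trapping_gf_eq_div hx]
  exact hasSum_div_one_sub_of_eq_add_conv hp (hasSum_hookProb_mul_pow (by nlinarith))
    (hasSum_twistProb_mul_pow (abs_lt.mpr ⟨by linarith, by linarith⟩)) (twist_gf_lt_one hx).ne
    (summable_norm_mul_pow_of_abs_le_one abs_twistProb_le_one hx)
    (summable_norm_mul_pow_of_abs_le_one hpb hx)
end

section
/- With p : ℕ → ℝ defined by p_ℓ = h_ℓ + ∑_{i=2}^{ℓ} t_i * p_{ℓ-i}, where h_ℓ = (1/2)^{(ℓ+3)/2} for odd ℓ ≥ 3 and 0 otherwise, t_2 = 1/2, t_ℓ = (1/2)^ℓ for ℓ ≥ 3, and t_ℓ = 0 for ℓ ≤ 1: the series ∑_{ℓ=0}^∞ p_ℓ converges to 1, the series ∑_{ℓ=0}^∞ ℓ * p_ℓ converges to 13, and ∑_{ℓ=0}^∞ ℓ^2 * p_ℓ - 13^2 = 98. -/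
/-!
The trapping probabilities solve the renewal equation `p = h + t ⋆ p` (Cauchy product, with
`t₀ = t₁ = 0`). Since `∑ tᵢ (20/19)ⁱ = 2800/3249 < 1`, induction gives `p ℓ ≤ 4 (19/20)^ℓ`, so every
moment of `p` converges. The Leibniz rule `n (f ⋆ g) = (n f) ⋆ g + f ⋆ (n g)` turns the equation
into linear equations for the moments `Pⱼ = ∑ ℓʲ pℓ`:
`P₀ = H₀ + T₀ P₀`, `P₁ = H₁ + T₁ P₀ + T₀ P₁`, `P₂ = H₂ + T₂ P₀ + 2 T₁ P₁ + T₀ P₂`.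
With `(H₀, H₁, H₂) = (1/4, 5/4, 33/4)` and `(T₀, T₁, T₂) = (3/4, 2, 13/2)` this gives
`(P₀, P₁, P₂) = (1, 13, 267)`.
-/

open Finset

def cauchyProduct (f g : ℕ → ℝ) (n : ℕ) : ℝ :=
  ∑ ij ∈ antidiagonal n, f ij.1 * g ij.2

theorem sum_Icc_mul_sub_eq_cauchyProduct {f : ℕ → ℝ} {m : ℕ} (hf : ∀ k < m, f k = 0)
    (g : ℕ → ℝ) (n : ℕ) : ∑ k ∈ Icc m n, f k * g (n - k) = cauchyProduct f g n := by
  rw [cauchyProduct, Nat.sum_antidiagonal_eq_sum_range_succ (fun i j => f i * g j)]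
  refine sum_subset (fun k hk => ?_) (fun k hk hkm => ?_)
  · simp only [mem_Icc, mem_range] at hk ⊢
    omega
  · simp only [mem_Icc, mem_range, not_and, not_le] at hk hkm
    rw [hf k (by omega), zero_mul]

theorem HasSum.cauchyProduct {f g : ℕ → ℝ} {a b : ℝ} (hf : HasSum f a) (hg : HasSum g b) :
    HasSum (cauchyProduct f g) (a * b) := by
  have hf' : Summable fun n => ‖f n‖ := summable_norm_iff.2 hf.summable
  have hg' : Summable fun n => ‖g n‖ := summable_norm_iff.2 hg.summable
  rw [← hf.tsum_eq, ← hg.tsum_eq, tsum_mul_tsum_eq_tsum_sum_antidiagonal_of_summable_norm hf' hg']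
  exact (summable_norm_sum_mul_antidiagonal_of_summable_norm hf' hg').of_norm.hasSum

theorem natCast_mul_cauchyProduct (f g : ℕ → ℝ) (n : ℕ) :
    n * cauchyProduct f g n =
      cauchyProduct (fun k => k * f k) g n + cauchyProduct f (fun k => k * g k) n := by
  simp only [cauchyProduct, mul_sum, ← sum_add_distrib]
  refine sum_congr rfl fun ij hij => ?_
  rw [← mem_antidiagonal.1 hij]
  push_cast
  ring

theorem natCast_sq_mul_cauchyProduct (f g : ℕ → ℝ) (n : ℕ) :
    (n : ℝ) ^ 2 * cauchyProduct f g n =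
      cauchyProduct (fun k => (k : ℝ) ^ 2 * f k) g n
        + 2 * cauchyProduct (fun k => k * f k) (fun k => k * g k) n
        + cauchyProduct f (fun k => (k : ℝ) ^ 2 * g k) n := by
  simp only [cauchyProduct, mul_sum, ← sum_add_distrib]
  refine sum_congr rfl fun ij hij => ?_
  rw [← mem_antidiagonal.1 hij]
  push_cast
  ring

theorem cauchyProduct_le_of_forall_lt {t f g : ℕ → ℝ} {n : ℕ} (ht : ∀ k, 0 ≤ t k) (ht0 : t 0 = 0)
    (hfg : ∀ m < n, f m ≤ g m) : cauchyProduct t f n ≤ cauchyProduct t g n := by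
  refine sum_le_sum fun ij hij => ?_
  rcases Nat.eq_zero_or_pos ij.1 with hi | hi
  · simp [hi, ht0]
  · exact mul_le_mul_of_nonneg_left (hfg _ (by rw [← mem_antidiagonal.1 hij]; omega)) (ht _)

theorem cauchyProduct_geometric_le {t : ℕ → ℝ} {r A C : ℝ} (ht : ∀ k, 0 ≤ t k) (hr : 0 < r)
    (hA : HasSum (fun k => r⁻¹ ^ k * t k) A) (hC : 0 ≤ C) (n : ℕ) :
    cauchyProduct t (fun m => C * r ^ m) n ≤ C * A * r ^ n := by
  have hsplit : cauchyProduct t (fun m => C * r ^ m) n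
      = C * r ^ n * ∑ k ∈ range (n + 1), r⁻¹ ^ k * t k := by
    rw [cauchyProduct, mul_sum,
      ← Nat.sum_antidiagonal_eq_sum_range_succ fun i _ => C * r ^ n * (r⁻¹ ^ i * t i)]
    refine sum_congr rfl fun ij hij => ?_
    rw [← mem_antidiagonal.1 hij, pow_add, inv_pow]
    field_simp
  have hpartial : ∑ k ∈ range (n + 1), r⁻¹ ^ k * t k ≤ A :=
    hA.tsum_eq ▸ hA.summable.sum_le_tsum _ fun k _ => mul_nonneg (by positivity) (ht k)
  calc cauchyProduct t (fun m => C * r ^ m) n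
      = C * r ^ n * ∑ k ∈ range (n + 1), r⁻¹ ^ k * t k := hsplit
    _ ≤ C * r ^ n * A := mul_le_mul_of_nonneg_left hpartial (by positivity)
    _ = C * A * r ^ n := by ring

section RenewalEquation

variable {h t p : ℕ → ℝ}

theorem renewal_nonneg (hh : ∀ n, 0 ≤ h n) (ht : ∀ k, 0 ≤ t k) (ht0 : t 0 = 0)
    (hp : ∀ n, p n = h n + cauchyProduct t p n) (n : ℕ) : 0 ≤ p n := by
  induction n using Nat.strong_induction_on with
  | _ n ih =>
    have hconv : cauchyProduct t 0 n ≤ cauchyProduct t p n :=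
      cauchyProduct_le_of_forall_lt ht ht0 ih
    have hzero : cauchyProduct t 0 n = 0 := by simp [cauchyProduct]
    linarith [hp n, hh n]

theorem renewal_le_geometric {r a A C : ℝ} (ht : ∀ k, 0 ≤ t k) (ht0 : t 0 = 0) (hr : 0 < r)
    (hA : HasSum (fun k => r⁻¹ ^ k * t k) A) (hh : ∀ n, h n ≤ a * r ^ n) (hC : 0 ≤ C)
    (haC : a + C * A ≤ C) (hp : ∀ n, p n = h n + cauchyProduct t p n) (n : ℕ) :
    p n ≤ C * r ^ n := by
  induction n using Nat.strong_induction_on with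
  | _ n ih =>
    have hconv := (cauchyProduct_le_of_forall_lt ht ht0 ih).trans
      (cauchyProduct_geometric_le ht hr hA hC n)
    calc p n = h n + cauchyProduct t p n := hp n
      _ ≤ a * r ^ n + C * A * r ^ n := add_le_add (hh n) hconv
      _ = (a + C * A) * r ^ n := by ring
      _ ≤ C * r ^ n := mul_le_mul_of_nonneg_right haC (pow_pos hr n).le

theorem renewal_sum_eq {H T P : ℝ} (hp : ∀ n, p n = h n + cauchyProduct t p n)
    (hH : HasSum h H) (hT : HasSum t T) (hP : HasSum p P) : P = H + T * P :=
  hP.unique <| (funext hp : p = _) ▸ hH.add (hT.cauchyProduct hP)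

theorem renewal_first_moment_eq {H₁ T₀ T₁ P₀ P₁ : ℝ} (hp : ∀ n, p n = h n + cauchyProduct t p n)
    (hH₁ : HasSum (fun n : ℕ => n * h n) H₁) (hT₀ : HasSum t T₀)
    (hT₁ : HasSum (fun n : ℕ => n * t n) T₁) (hP₀ : HasSum p P₀)
    (hP₁ : HasSum (fun n : ℕ => n * p n) P₁) : P₁ = H₁ + T₁ * P₀ + T₀ * P₁ := by
  refine hP₁.unique ?_
  convert hH₁.add ((hT₁.cauchyProduct hP₀).add (hT₀.cauchyProduct hP₁)) using 1
  · ext n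
    rw [hp n, mul_add, natCast_mul_cauchyProduct]
  · ring

theorem renewal_second_moment_eq {H₂ T₀ T₁ T₂ P₀ P₁ P₂ : ℝ}
    (hp : ∀ n, p n = h n + cauchyProduct t p n)
    (hH₂ : HasSum (fun n : ℕ => (n : ℝ) ^ 2 * h n) H₂) (hT₀ : HasSum t T₀)
    (hT₁ : HasSum (fun n : ℕ => n * t n) T₁) (hT₂ : HasSum (fun n : ℕ => (n : ℝ) ^ 2 * t n) T₂)
    (hP₀ : HasSum p P₀) (hP₁ : HasSum (fun n : ℕ => n * p n) P₁)
    (hP₂ : HasSum (fun n : ℕ => (n : ℝ) ^ 2 * p n) P₂) :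
    P₂ = H₂ + T₂ * P₀ + 2 * (T₁ * P₁) + T₀ * P₂ := by
  refine hP₂.unique ?_
  convert hH₂.add (((hT₂.cauchyProduct hP₀).add
    ((hT₁.cauchyProduct hP₁).mul_left 2)).add (hT₀.cauchyProduct hP₂)) using 1
  · ext n
    rw [hp n, mul_add, natCast_sq_mul_cauchyProduct]
  · ring

end RenewalEquation

theorem summable_pow_mul_of_le_geometric {f : ℕ → ℝ} {C r : ℝ} (hf0 : ∀ n, 0 ≤ f n)
    (hf : ∀ n, f n ≤ C * r ^ n) (hr0 : 0 ≤ r) (hr : r < 1) (j : ℕ) :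
    Summable fun n : ℕ => (n : ℝ) ^ j * f n := by
  refine Summable.of_nonneg_of_le (fun n => mul_nonneg (by positivity) (hf0 n))
    (fun n => ?_) ((summable_pow_mul_geometric_of_norm_lt_one j
      (by rwa [Real.norm_of_nonneg hr0])).mul_left C)
  calc (n : ℝ) ^ j * f n ≤ (n : ℝ) ^ j * (C * r ^ n) :=
        mul_le_mul_of_nonneg_left (hf n) (by positivity)
    _ = C * ((n : ℝ) ^ j * r ^ n) := by ring

theorem HasSum.add_sum_range_sub_of_eq_of_ge {G : Type*} [AddCommGroup G] [TopologicalSpace G]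
    [ContinuousAdd G] {f g : ℕ → G} {a : G} {m : ℕ} (hg : HasSum g a)
    (hfg : ∀ n, m ≤ n → f n = g n) : HasSum f (a + ∑ n ∈ range m, (f n - g n)) := by
  convert hg.add (hasSum_sum_of_ne_finset_zero (f := fun n => f n - g n) (s := range m)
    fun n hn => ?_) using 1
  · ext n
    simp
  · rw [hfg n (by simpa using hn), sub_self]

theorem hasSum_quadratic_mul_geometric_half (a b c : ℝ) :
    HasSum (fun n : ℕ => (a * n ^ 2 + b * n + c) * (1 / 2) ^ n) (6 * a + 2 * b + 2 * c) := by
  have h₀ : HasSum (fun n : ℕ => (1 / 2 : ℝ) ^ n) 2 := hasSum_geometric_two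
  have h₁ : HasSum (fun n : ℕ => n * (1 / 2 : ℝ) ^ n) 2 := by
    convert hasSum_coe_mul_geometric_of_norm_lt_one (𝕜 := ℝ) (r := 1 / 2) (by norm_num) using 1
    · rfl
    · norm_num
  -- `n ^ 2 = 2 * (n + 2).choose 2 - 3 * n - 2`
  have h₂ : HasSum (fun n : ℕ => (n : ℝ) ^ 2 * (1 / 2 : ℝ) ^ n) 6 := by
    have hchoose := hasSum_choose_mul_geometric_of_norm_lt_one (𝕜 := ℝ) 2 (r := 1 / 2)
      (by norm_num)
    refine (by norm_num : (2 : ℝ) * (1 / (1 - 1 / 2) ^ (2 + 1)) - (3 * 2 + 2 * 2) = 6) ▸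
      ((hchoose.mul_left 2).sub ((h₁.mul_left 3).add (h₀.mul_left 2))).congr_fun fun n => ?_
    rw [Nat.cast_choose_two]
    push_cast
    ring
  refine (by ring : a * 6 + b * 2 + c * 2 = 6 * a + 2 * b + 2 * c) ▸
    (((h₂.mul_left a).add (h₁.mul_left b)).add (h₀.mul_left c)).congr_fun fun n => ?_
  ring

noncomputable def ladderT (ℓ : ℕ) : ℝ := if ℓ < 2 then 0 else if ℓ = 2 then 1 / 2 else (1 / 2) ^ ℓ

noncomputable def ladderH (ℓ : ℕ) : ℝ :=
  if Odd ℓ ∧ 3 ≤ ℓ then (1 / 2 : ℝ) ^ ((ℓ + 3) / 2) else 0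

theorem ladderT_nonneg (ℓ : ℕ) : 0 ≤ ladderT ℓ := by
  unfold ladderT
  split_ifs <;> positivity

theorem hasSum_mul_ladderT {w : ℕ → ℝ} {a : ℝ} (hw : HasSum (fun n => w n * (1 / 2) ^ n) a) :
    HasSum (fun n => w n * ladderT n) (a - w 0 - w 1 / 2 + w 2 / 4) := by
  have hsum := hw.add_sum_range_sub_of_eq_of_ge (f := fun n => w n * ladderT n) (m := 3)
    fun n hn => by rw [ladderT, if_neg (by omega), if_neg (by omega)]
  have hcorrection : ∑ n ∈ range 3, (w n * ladderT n - w n * (1 / 2) ^ n)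
      = -w 0 - w 1 / 2 + w 2 / 4 := by
    rw [sum_range_succ, sum_range_succ, sum_range_one]
    norm_num [ladderT]
    ring
  rw [hcorrection] at hsum
  exact (show a + (-w 0 - w 1 / 2 + w 2 / 4) = a - w 0 - w 1 / 2 + w 2 / 4 by ring) ▸ hsum

theorem hasSum_ladderT : HasSum ladderT (3 / 4) := by
  convert hasSum_mul_ladderT (w := 1) (a := 2) (by simpa using hasSum_geometric_two) using 1
  · simp
  · norm_num

theorem hasSum_natCast_mul_ladderT : HasSum (fun n : ℕ => n * ladderT n) 2 := by
  convert hasSum_mul_ladderT (w := fun n : ℕ => (n : ℝ)) (a := 2)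
    (by simpa using hasSum_quadratic_mul_geometric_half 0 1 0) using 1
  norm_num

theorem hasSum_natCast_sq_mul_ladderT :
    HasSum (fun n : ℕ => (n : ℝ) ^ 2 * ladderT n) (13 / 2) := by
  convert hasSum_mul_ladderT (w := fun n : ℕ => (n : ℝ) ^ 2) (a := 6)
    (by simpa using hasSum_quadratic_mul_geometric_half 1 0 0) using 1
  norm_num

theorem hasSum_inv_pow_mul_ladderT :
    HasSum (fun n : ℕ => (19 / 20 : ℝ)⁻¹ ^ n * ladderT n) (2800 / 3249) := by
  have hgeom : HasSum (fun n : ℕ => (19 / 20 : ℝ)⁻¹ ^ n * (1 / 2) ^ n) (19 / 9) := by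
    convert hasSum_geometric_of_lt_one (r := 10 / 19) (by norm_num) (by norm_num) using 1
    · ext n
      rw [← mul_pow]
      norm_num
    · norm_num
  convert hasSum_mul_ladderT hgeom using 1
  norm_num

theorem ladderH_nonneg (ℓ : ℕ) : 0 ≤ ladderH ℓ := by
  unfold ladderH
  split_ifs <;> positivity

theorem ladderH_le (ℓ : ℕ) : ladderH ℓ ≤ 1 / 2 * (19 / 20) ^ ℓ := by
  unfold ladderH
  split_ifs with hℓ
  · obtain ⟨k, rfl⟩ : ∃ k, ℓ = 2 * k + 3 := ⟨(ℓ - 3) / 2, by obtain ⟨⟨m, hm⟩, _⟩ := hℓ; omega⟩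
    have hk : (1 / 2 : ℝ) ^ k ≤ (361 / 400) ^ k := pow_le_pow_left₀ (by norm_num) (by norm_num) k
    rw [show (2 * k + 3 + 3) / 2 = k + 3 by omega, pow_add, pow_add, pow_mul]
    norm_num
    linarith [pow_nonneg (by norm_num : (0 : ℝ) ≤ 1 / 2) k]
  · positivity

theorem hasSum_mul_ladderH {w : ℕ → ℝ} {a : ℝ}
    (hw : HasSum (fun k : ℕ => w (2 * k + 3) * (1 / 2) ^ (k + 3)) a) :
    HasSum (fun n => w n * ladderH n) a := by
  have hinj : Function.Injective fun k : ℕ => 2 * k + 3 := fun _ _ h => by simp only at h; omega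
  refine (hinj.hasSum_iff fun n hn => ?_).1 (hw.congr_fun fun k => ?_)
  · rw [ladderH, if_neg, mul_zero]
    rintro ⟨⟨m, rfl⟩, h3⟩
    exact hn ⟨m - 1, by simp only; omega⟩
  · simp only [Function.comp_apply, ladderH]
    rw [if_pos ⟨⟨k + 1, by ring⟩, by omega⟩, show (2 * k + 3 + 3) / 2 = k + 3 by omega]

theorem hasSum_ladderH : HasSum ladderH (1 / 4) := by
  have hsum := hasSum_mul_ladderH (w := fun _ => 1) <|
    (by norm_num : 6 * (0 : ℝ) + 2 * 0 + 2 * (1 / 8) = 1 / 4) ▸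
      (hasSum_quadratic_mul_geometric_half 0 0 (1 / 8)).congr_fun fun k => by ring
  simpa using hsum

theorem hasSum_natCast_mul_ladderH : HasSum (fun n : ℕ => n * ladderH n) (5 / 4) :=
  hasSum_mul_ladderH <| (by norm_num : 6 * (0 : ℝ) + 2 * (1 / 4) + 2 * (3 / 8) = 5 / 4) ▸
    (hasSum_quadratic_mul_geometric_half 0 (1 / 4) (3 / 8)).congr_fun fun k => by push_cast; ring

theorem hasSum_natCast_sq_mul_ladderH : HasSum (fun n : ℕ => (n : ℝ) ^ 2 * ladderH n) (33 / 4) :=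
  hasSum_mul_ladderH <| (by norm_num : 6 * (1 / 2 : ℝ) + 2 * (3 / 2) + 2 * (9 / 8) = 33 / 4) ▸
    (hasSum_quadratic_mul_geometric_half (1 / 2) (3 / 2) (9 / 8)).congr_fun fun k => by
      push_cast; ring

/-- A GSAW on the one-sided square ladder becomes trapped with probability 1, after a mean
of 13 steps with variance 98. -/
theorem trapping_length_moments_one_sided_square (h t p : ℕ → ℝ)
    (hh : ∀ ℓ : ℕ, h ℓ = if Odd ℓ ∧ 3 ≤ ℓ then (1 / 2 : ℝ) ^ ((ℓ + 3) / 2) else 0)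
    (ht0 : ∀ ℓ ≤ 1, t ℓ = 0)
    (ht2 : t 2 = 1 / 2)
    (ht3 : ∀ ℓ : ℕ, 3 ≤ ℓ → t ℓ = (1 / 2 : ℝ) ^ ℓ)
    (hp : ∀ ℓ : ℕ, p ℓ = h ℓ + ∑ i ∈ Finset.Icc 2 ℓ, t i * p (ℓ - i)) :
    HasSum p 1 ∧
    HasSum (fun ℓ : ℕ => (ℓ : ℝ) * p ℓ) 13 ∧
    HasSum (fun ℓ : ℕ => (ℓ : ℝ) ^ 2 * p ℓ) (98 + 13 ^ 2) := by
  obtain rfl : h = ladderH := funext hh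
  obtain rfl : t = ladderT := funext fun ℓ => by
    unfold ladderT
    split_ifs with h₁ h₂
    exacts [ht0 ℓ (by omega), h₂ ▸ ht2, ht3 ℓ (by omega)]
  have hrenewal : ∀ n, p n = ladderH n + cauchyProduct ladderT p n := fun n => by
    rw [hp n, sum_Icc_mul_sub_eq_cauchyProduct fun k hk => by simp [ladderT, hk]]
  have hp_le := renewal_le_geometric ladderT_nonneg rfl (by norm_num) hasSum_inv_pow_mul_ladderT
    ladderH_le (C := 4) (by norm_num) (by norm_num) hrenewal
  have hmoment := summable_pow_mul_of_le_geometric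
    (renewal_nonneg ladderH_nonneg ladderT_nonneg rfl hrenewal) hp_le (by norm_num) (by norm_num)
  have hP₀ : HasSum p (∑' n, p n) := by simpa using (hmoment 0).hasSum
  have hP₁ : HasSum (fun n : ℕ => n * p n) (∑' n : ℕ, n * p n) := by simpa using (hmoment 1).hasSum
  have hP₂ := (hmoment 2).hasSum
  have e₀ := renewal_sum_eq hrenewal hasSum_ladderH hasSum_ladderT hP₀
  have e₁ := renewal_first_moment_eq hrenewal hasSum_natCast_mul_ladderH hasSum_ladderT
    hasSum_natCast_mul_ladderT hP₀ hP₁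
  have e₂ := renewal_second_moment_eq hrenewal hasSum_natCast_sq_mul_ladderH hasSum_ladderT
    hasSum_natCast_mul_ladderT hasSum_natCast_sq_mul_ladderT hP₀ hP₁ hP₂
  refine ⟨?_, ?_, ?_⟩
  · convert hP₀
    linarith
  · convert hP₁
    linarith
  · convert hP₂
    linarith
end

section
/- Define sequences h', t', q : ℕ → ℝ by: h'_w = (1/2)^{w+2} for w ≥ 1 and h'_0 = 0; t'_1 = 1/2, t'_w = (1/2)^{w+1} for w ≥ 2, and t'_0 = 0; and q_w = h'_w + ∑_{j=1}^{w} t'_j * q_{w-j} (with q_0 = 0). Then ∑_{w=0}^∞ q_w = 1, ∑_{w=0}^∞ w * q_w = 7, and ∑_{w=0}^∞ w^2 * q_w - 7^2 = 40. -/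
/-!
Because `h'` and `t'` decay geometrically with ratio `1/2` (for `t'` from index `2` on),
subtracting half of the convolution equation at `w + 1` from the one at `w + 2` leaves the
two-term recurrence `q (w + 2) = q (w + 1) - q w / 8` with `q 0 = 0`, `q 1 = 1/8`. Its
characteristic roots `a, b = (2 ± √2)/4` lie in `(0, 1)`, so `q` is a multiple of `aʷ - bʷ`, and
its moments come from `∑ rⁿ`, `∑ n rⁿ`, `∑ n² rⁿ`. Written in `a + b = 1` and `a b = 1/8` they
are `1`, `7` and `89 = 40 + 7²`.
-/

open Finset

section Geometric

variable {𝕜 : Type*} [NormedField 𝕜] {r : 𝕜}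

theorem hasSum_sq_mul_geometric_of_norm_lt_one (hr : ‖r‖ < 1) :
    HasSum (fun n : ℕ ↦ (n : 𝕜) ^ 2 * r ^ n) (r * (1 + r) / (1 - r) ^ 3) := by
  have hr1 : 1 - r ≠ 0 := (isUnit_one_sub_of_norm_lt_one hr).ne_zero
  have hsq (n : ℕ) : (n : 𝕜) ^ 2 =
      2 * ((n + 2).choose 2 : 𝕜) - 3 * ((n + 1).choose 1 : 𝕜) + ((n + 0).choose 0 : 𝕜) := by
    have h := congrArg (Nat.cast (R := 𝕜)) (Nat.add_one_mul_choose_eq (n + 1) 1)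
    simp only [Nat.choose_one_right, Nat.choose_zero_right] at h ⊢
    push_cast at h ⊢
    linear_combination h
  have H := (((hasSum_choose_mul_geometric_of_norm_lt_one 2 hr).mul_left 2).sub
    ((hasSum_choose_mul_geometric_of_norm_lt_one 1 hr).mul_left 3)).add
    (hasSum_choose_mul_geometric_of_norm_lt_one 0 hr)
  rw [show (2 : 𝕜) * (1 / (1 - r) ^ (2 + 1)) - 3 * (1 / (1 - r) ^ (1 + 1)) + 1 / (1 - r) ^ (0 + 1)
    = r * (1 + r) / (1 - r) ^ 3 by field_simp; ring] at H
  exact H.congr_fun fun n ↦ by rw [hsq]; ring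

end Geometric

theorem Finset.sum_Icc_one_sub_eq_sum_range {M : Type*} [AddCommMonoid M] (f : ℕ → ℕ → M)
    (m : ℕ) : ∑ j ∈ Icc 1 m, f j (m - j) = ∑ k ∈ range m, f (m - k) k := by
  refine sum_nbij' (m - ·) (m - ·) ?_ ?_ ?_ ?_ ?_ <;> intro j hj <;> grind

theorem add_two_eq_of_renewal_of_geometric_tail {R : Type*} [CommRing R] {h t q : ℕ → R} {ρ : R}
    (hq : ∀ w, q w = h w + ∑ j ∈ Icc 1 w, t j * q (w - j))
    (hh : ∀ n, h (n + 2) = ρ * h (n + 1)) (ht : ∀ j, 2 ≤ j → t (j + 1) = ρ * t j) (n : ℕ) :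
    q (n + 2) = (t 1 + ρ) * q (n + 1) + (t 2 - ρ * t 1) * q n := by
  have hconv (m : ℕ) : ∑ j ∈ Icc 1 m, t j * q (m - j) = ∑ k ∈ range m, t (m - k) * q k :=
    sum_Icc_one_sub_eq_sum_range (fun j i ↦ t j * q i) m
  have htail : ∑ k ∈ range n, t (n + 2 - k) * q k = ρ * ∑ k ∈ range n, t (n + 1 - k) * q k := by
    rw [mul_sum]
    refine sum_congr rfl fun k hk ↦ ?_
    rw [show n + 2 - k = n + 1 - k + 1 by grind, ht _ (by grind), mul_assoc]
  have e2 := hq (n + 2)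
  have e1 := hq (n + 1)
  rw [hconv, sum_range_succ, sum_range_succ, htail] at e2
  rw [hconv, sum_range_succ] at e1
  simp only [show n + 2 - (n + 1) = 1 by omega, show n + 2 - n = 2 by omega,
    show n + 1 - n = 1 by omega] at e1 e2
  rw [e2, hh, e1]
  ring

section LinearRecurrence

variable {K : Type*} {u : ℕ → K} {a b : K}

theorem eq_div_mul_pow_sub_pow_of_linear_recurrence [Field K] (hab : a ≠ b) (h0 : u 0 = 0)
    (hrec : ∀ n, u (n + 2) = (a + b) * u (n + 1) - a * b * u n) (n : ℕ) :
    u n = u 1 / (a - b) * (a ^ n - b ^ n) := by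
  have hab' : a - b ≠ 0 := sub_ne_zero.2 hab
  induction n using Nat.twoStepInduction with
  | zero => simp [h0]
  | one => field_simp
  | more n ih0 ih1 =>
    rw [hrec, ih0, ih1]
    ring

variable [NormedField K]

theorem hasSum_mul_of_linear_recurrence {g : ℕ → K} {F : K → K}
    (hF : ∀ r : K, ‖r‖ < 1 → HasSum (fun n ↦ g n * r ^ n) (F r)) (ha : ‖a‖ < 1) (hb : ‖b‖ < 1)
    (hab : a ≠ b) (h0 : u 0 = 0) (hrec : ∀ n, u (n + 2) = (a + b) * u (n + 1) - a * b * u n) :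
    HasSum (fun n ↦ g n * u n) (u 1 / (a - b) * (F a - F b)) :=
  (((hF a ha).sub (hF b hb)).mul_left _).congr_fun fun n ↦ by
    rw [eq_div_mul_pow_sub_pow_of_linear_recurrence hab h0 hrec n]
    ring

-- The three values are `U 1`, `(x U')(1)` and `(x (x U')')(1)` for the generating function
-- `U x = u 1 * x / (1 - (a + b) * x + a * b * x ^ 2)`.
theorem hasSum_of_linear_recurrence (ha : ‖a‖ < 1) (hb : ‖b‖ < 1) (hab : a ≠ b) (h0 : u 0 = 0)
    (hrec : ∀ n, u (n + 2) = (a + b) * u (n + 1) - a * b * u n) :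
    HasSum u (u 1 / (1 - (a + b) + a * b)) := by
  have H := hasSum_mul_of_linear_recurrence (g := 1)
    (fun r hr ↦ by simpa using hasSum_geometric_of_norm_lt_one hr) ha hb hab h0 hrec
  have := (isUnit_one_sub_of_norm_lt_one ha).ne_zero
  have := (isUnit_one_sub_of_norm_lt_one hb).ne_zero
  have := sub_ne_zero.2 hab
  rw [show u 1 / (a - b) * ((1 - a)⁻¹ - (1 - b)⁻¹) = u 1 / (1 - (a + b) + a * b) by
    rw [show 1 - (a + b) + a * b = (1 - a) * (1 - b) by ring]; field_simp; ring] at H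
  simpa using H

theorem hasSum_coe_mul_of_linear_recurrence (ha : ‖a‖ < 1) (hb : ‖b‖ < 1) (hab : a ≠ b)
    (h0 : u 0 = 0) (hrec : ∀ n, u (n + 2) = (a + b) * u (n + 1) - a * b * u n) :
    HasSum (fun n : ℕ ↦ (n : K) * u n) (u 1 * (1 - a * b) / (1 - (a + b) + a * b) ^ 2) := by
  have H := hasSum_mul_of_linear_recurrence (g := fun n ↦ (n : K))
    (fun r hr ↦ hasSum_coe_mul_geometric_of_norm_lt_one hr) ha hb hab h0 hrec
  have := (isUnit_one_sub_of_norm_lt_one ha).ne_zero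
  have := (isUnit_one_sub_of_norm_lt_one hb).ne_zero
  have := sub_ne_zero.2 hab
  rwa [show u 1 / (a - b) * (a / (1 - a) ^ 2 - b / (1 - b) ^ 2)
      = u 1 * (1 - a * b) / (1 - (a + b) + a * b) ^ 2 by
    rw [show 1 - (a + b) + a * b = (1 - a) * (1 - b) by ring]; field_simp; ring] at H

theorem hasSum_sq_mul_of_linear_recurrence (ha : ‖a‖ < 1) (hb : ‖b‖ < 1) (hab : a ≠ b)
    (h0 : u 0 = 0) (hrec : ∀ n, u (n + 2) = (a + b) * u (n + 1) - a * b * u n) :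
    HasSum (fun n : ℕ ↦ (n : K) ^ 2 * u n)
      (u 1 * (1 + (a + b) - 6 * (a * b) + (a + b) * (a * b) + (a * b) ^ 2) /
        (1 - (a + b) + a * b) ^ 3) := by
  have H := hasSum_mul_of_linear_recurrence (g := fun n ↦ (n : K) ^ 2)
    (fun r hr ↦ hasSum_sq_mul_geometric_of_norm_lt_one hr) ha hb hab h0 hrec
  have := (isUnit_one_sub_of_norm_lt_one ha).ne_zero
  have := (isUnit_one_sub_of_norm_lt_one hb).ne_zero
  have := sub_ne_zero.2 hab
  rwa [show u 1 / (a - b) * (a * (1 + a) / (1 - a) ^ 3 - b * (1 + b) / (1 - b) ^ 3)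
      = u 1 * (1 + (a + b) - 6 * (a * b) + (a + b) * (a * b) + (a * b) ^ 2) /
        (1 - (a + b) + a * b) ^ 3 by
    rw [show 1 - (a + b) + a * b = (1 - a) * (1 - b) by ring]; field_simp; ring] at H

end LinearRecurrence

theorem trapping_width_moments_one_sided_square_general (h' t' q : ℕ → ℝ)
    (hh0 : h' 0 = 0)
    (hh : ∀ w : ℕ, 1 ≤ w → h' w = (1 / 2 : ℝ) ^ (w + 2))
    (ht1 : t' 1 = 1 / 2)
    (ht : ∀ w : ℕ, 2 ≤ w → t' w = (1 / 2 : ℝ) ^ (w + 1))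
    (hq : ∀ w : ℕ, q w = h' w + ∑ j ∈ Finset.Icc 1 w, t' j * q (w - j)) :
    HasSum q 1 ∧
    HasSum (fun w : ℕ => (w : ℝ) * q w) 7 ∧
    HasSum (fun w : ℕ => (w : ℝ) ^ 2 * q w) (40 + 7 ^ 2) := by
  have hq0 : q 0 = 0 := by simpa [hh0] using hq 0
  have hq1 : q 1 = 1 / 8 := by norm_num [hq 1, hq0, hh 1 le_rfl]
  obtain ⟨a, b, ha, hb, hab, hsum, hprod⟩ : ∃ a b : ℝ,
      ‖a‖ < 1 ∧ ‖b‖ < 1 ∧ a ≠ b ∧ a + b = 1 ∧ a * b = 1 / 8 := by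
    have hs : √2 ^ 2 = 2 := Real.sq_sqrt (by norm_num)
    have hs0 : 0 < √2 := by positivity
    refine ⟨(2 + √2) / 4, (2 - √2) / 4, ?_, ?_, by linarith, by ring, by linear_combination -hs / 16⟩
    all_goals rw [Real.norm_eq_abs, abs_lt]; constructor <;> nlinarith
  have hrec (n : ℕ) : q (n + 2) = (a + b) * q (n + 1) - a * b * q n := by
    rw [add_two_eq_of_renewal_of_geometric_tail hq (ρ := 1 / 2)
      (fun n ↦ by rw [hh _ (by omega), hh _ (by omega)]; ring)
      (fun j hj ↦ by rw [ht _ (by omega), ht _ hj]; ring), ht1, ht 2 le_rfl, hsum, hprod]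
    ring
  have H0 := hasSum_of_linear_recurrence ha hb hab hq0 hrec
  have H1 := hasSum_coe_mul_of_linear_recurrence ha hb hab hq0 hrec
  have H2 := hasSum_sq_mul_of_linear_recurrence ha hb hab hq0 hrec
  rw [hq1, hsum, hprod] at H0 H1 H2
  norm_num at H0 H1 H2 ⊢
  exact ⟨H0, H1, H2⟩

/-- The width of a trapped GSAW on the one-sided square ladder has mean 7 and variance 40,
and the width probabilities `q` (defined by the convolution recursion from the width
marginals `h'`, `t'` of the hook and twist probabilities) sum to 1. -/
theorem trapping_width_moments_one_sided_square (h' t' q : ℕ → ℝ)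
    (hh0 : h' 0 = 0)
    (hh : ∀ w : ℕ, 1 ≤ w → h' w = (1 / 2 : ℝ) ^ (w + 2))
    (ht0 : t' 0 = 0)
    (ht1 : t' 1 = 1 / 2)
    (ht : ∀ w : ℕ, 2 ≤ w → t' w = (1 / 2 : ℝ) ^ (w + 1))
    (hq : ∀ w : ℕ, q w = h' w + ∑ j ∈ Finset.Icc 1 w, t' j * q (w - j)) :
    HasSum q 1 ∧
    HasSum (fun w : ℕ => (w : ℝ) * q w) 7 ∧
    HasSum (fun w : ℕ => (w : ℝ) ^ 2 * q w) (40 + 7 ^ 2) :=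
  trapping_width_moments_one_sided_square_general h' t' q hh0 hh ht1 ht hq
end

section
/- The real number c = cos(π/7) satisfies 8*c^3 - 4*c^2 - 4*c + 1 = 0; equivalently, sec(π/7) = 1/cos(π/7) is a root of the polynomial x^3 - 4*x^2 - 4*x + 8. Moreover, every complex root of x^3 - 4*x^2 - 4*x + 8 other than sec(π/7) has absolute value strictly greater than sec(π/7), and sec(π/7) < √2, so sec(π/7) is the pole of smallest modulus of the rational function x^5*(4-x^3)/(3*(x^2-2)^2*(x^3-4*x^2-4*x+8)). -/
/-!
With `x = π/7` we have `cos 4x = -cos 3x`, and expanding both sides in `c = cos x` gives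
`(c + 1)(8c³ - 4c² - 4c + 1) = 0`; since `c > 0` the cubic factor vanishes, and multiplying
by `sec³ x` shows that `s = sec x` is a root of `p(x) = x³ - 4x² - 4x + 8`. The bound `s < √2` is
`cos(π/4) < cos(π/7)`. Dividing `p` by `x - s` leaves a quadratic with positive discriminant that
is negative at both `s` and `-s`, so the other two roots of `p` are real and lie outside `[-s, s]`.
-/

open Real

theorem cos_pi_div_seven_pos : 0 < cos (π / 7) :=
  cos_pos_of_mem_Ioo ⟨by linarith [pi_pos], by linarith [pi_pos]⟩

theorem cos_pi_div_seven_cubic :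
    8 * cos (π / 7) ^ 3 - 4 * cos (π / 7) ^ 2 - 4 * cos (π / 7) + 1 = 0 := by
  have hc := cos_pi_div_seven_pos
  set c := cos (π / 7)
  have h4 : cos (4 * (π / 7)) = 8 * c ^ 4 - 8 * c ^ 2 + 1 := by
    rw [show 4 * (π / 7) = 2 * (2 * (π / 7)) by ring, cos_two_mul, cos_two_mul]
    ring
  have h3 : cos (4 * (π / 7)) = -(4 * c ^ 3 - 3 * c) := by
    rw [show 4 * (π / 7) = π - 3 * (π / 7) by ring, cos_pi_sub, cos_three_mul]
  have hfactor : (c + 1) * (8 * c ^ 3 - 4 * c ^ 2 - 4 * c + 1) = 0 := by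
    linear_combination h4.symm.trans h3
  exact (mul_eq_zero.1 hfactor).resolve_left (by positivity)

theorem one_div_cos_pi_div_seven_lt_sqrt_two : 1 / cos (π / 7) < √2 := by
  have h : √2 / 2 < cos (π / 7) := by
    rw [← cos_pi_div_four]
    exact cos_lt_cos_of_nonneg_of_le_pi (by positivity) (by linarith [pi_pos])
      (by linarith [pi_pos])
  rw [div_lt_iff₀ (h.trans' (by positivity))]
  nlinarith [sq_sqrt (zero_le_two : (0 : ℝ) ≤ 2), mul_lt_mul_of_pos_left h (sqrt_pos.2 two_pos)]

theorem root_one_div_of_cubic_eq_zero {K : Type*} [Field K] {c : K} (hc : c ≠ 0)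
    (h : 8 * c ^ 3 - 4 * c ^ 2 - 4 * c + 1 = 0) :
    (1 / c) ^ 3 - 4 * (1 / c) ^ 2 - 4 * (1 / c) + 8 = 0 := by
  field_simp
  linear_combination h

theorem Complex.exists_ofReal_eq_of_quadratic_eq_zero {a b c : ℝ} (ha : a ≠ 0)
    (hd : 0 ≤ discrim a b c) {z : ℂ} (hz : a * (z * z) + b * z + c = 0) :
    ∃ x : ℝ, (x : ℂ) = z := by
  have hsq : discrim (a : ℂ) b c = (√(discrim a b c) : ℂ) * (√(discrim a b c) : ℂ) := by
    rw [← ofReal_mul, mul_self_sqrt hd]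
    simp [discrim]
  rcases (quadratic_eq_zero_iff (by exact_mod_cast ha) hsq z).1 hz with rfl | rfl
  · exact ⟨(-b + √(discrim a b c)) / (2 * a), by push_cast; ring⟩
  · exact ⟨(-b - √(discrim a b c)) / (2 * a), by push_cast; ring⟩

theorem lt_abs_of_quadratic_eq_zero {b c s x : ℝ} (hs : s ^ 2 + b * s + c < 0)
    (hs' : s ^ 2 - b * s + c < 0) (hx : x ^ 2 + b * x + c = 0) : s < |x| := by
  by_contra! hle
  obtain ⟨h1, h2⟩ := abs_le.1 hle
  rcases h1.eq_or_lt with rfl | h1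
  · nlinarith
  · nlinarith [mul_nonneg (sub_nonneg.2 h2) (neg_nonneg.2 hs'.le),
      mul_pos (neg_lt_iff_pos_add.1 h1) (neg_pos.2 hs),
      mul_nonneg (sub_nonneg.2 h2) (neg_lt_iff_pos_add.1 h1).le]

theorem lt_norm_of_cubic_eq_zero {s : ℝ} (hs0 : 0 ≤ s) (hs2 : s < 2)
    (hs : s ^ 3 - 4 * s ^ 2 - 4 * s + 8 = 0) {z : ℂ} (hz : z ^ 3 - 4 * z ^ 2 - 4 * z + 8 = 0)
    (hne : z ≠ s) : s < ‖z‖ := by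
  have hquad : 1 * (z * z) + ((s - 4 : ℝ) : ℂ) * z + ((s ^ 2 - 4 * s - 4 : ℝ) : ℂ) = 0 := by
    have hfactor : (z - s) * (1 * (z * z) + ((s - 4 : ℝ) : ℂ) * z +
        ((s ^ 2 - 4 * s - 4 : ℝ) : ℂ)) = 0 := by
      have hsC : (s : ℂ) ^ 3 - 4 * (s : ℂ) ^ 2 - 4 * s + 8 = 0 := by exact_mod_cast hs
      push_cast
      linear_combination hz - hsC
    exact (mul_eq_zero.1 hfactor).resolve_left (sub_ne_zero.2 hne)
  obtain ⟨x, rfl⟩ := Complex.exists_ofReal_eq_of_quadratic_eq_zero one_ne_zero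
    (by rw [discrim]; nlinarith) hquad
  have hx : x ^ 2 + (s - 4) * x + (s ^ 2 - 4 * s - 4) = 0 := by
    norm_cast at hquad
    linear_combination hquad
  rw [Complex.norm_real, norm_eq_abs]
  exact lt_abs_of_quadratic_eq_zero (by nlinarith) (by nlinarith) hx

theorem norm_eq_sqrt_two_of_sq_eq_two {z : ℂ} (hz : z ^ 2 = 2) : ‖z‖ = √2 := by
  rw [← sqrt_sq (norm_nonneg z), ← norm_pow, hz, Complex.norm_ofNat]

/-- `cos(π/7)` satisfies `8c^3 - 4c^2 - 4c + 1 = 0`; equivalently `sec(π/7)` is a root of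
`x^3 - 4x^2 - 4x + 8`.  Every other complex root of that cubic has modulus strictly larger
than `sec(π/7)`, and `sec(π/7) < √2`, so `sec(π/7)` is the pole of smallest modulus of the
trapping generating function `x^5(4-x^3)/(3(x^2-2)^2(x^3-4x^2-4x+8))`. -/
theorem sec_pi_div_seven_smallest_pole :
    (8 * Real.cos (Real.pi / 7) ^ 3 - 4 * Real.cos (Real.pi / 7) ^ 2 -
        4 * Real.cos (Real.pi / 7) + 1 = 0) ∧
    ((1 / Real.cos (Real.pi / 7)) ^ 3 - 4 * (1 / Real.cos (Real.pi / 7)) ^ 2 -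
        4 * (1 / Real.cos (Real.pi / 7)) + 8 = 0) ∧
    (∀ z : ℂ, z ^ 3 - 4 * z ^ 2 - 4 * z + 8 = 0 →
        z ≠ ((1 / Real.cos (Real.pi / 7) : ℝ) : ℂ) →
        1 / Real.cos (Real.pi / 7) < ‖z‖) ∧
    (1 / Real.cos (Real.pi / 7) < Real.sqrt 2) ∧
    (∀ z : ℂ, 3 * (z ^ 2 - 2) ^ 2 * (z ^ 3 - 4 * z ^ 2 - 4 * z + 8) = 0 →
        z ≠ ((1 / Real.cos (Real.pi / 7) : ℝ) : ℂ) →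
        1 / Real.cos (Real.pi / 7) < ‖z‖) := by
  have hpos := cos_pi_div_seven_pos
  have hcos := cos_pi_div_seven_cubic
  have hsec := root_one_div_of_cubic_eq_zero hpos.ne' hcos
  have hsqrt := one_div_cos_pi_div_seven_lt_sqrt_two
  have hlt_two : 1 / cos (π / 7) < 2 := hsqrt.trans (by norm_num [sqrt_lt' two_pos])
  have hcubic (z : ℂ) (hz : z ^ 3 - 4 * z ^ 2 - 4 * z + 8 = 0)
      (hne : z ≠ ((1 / cos (π / 7) : ℝ) : ℂ)) : 1 / cos (π / 7) < ‖z‖ :=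
    lt_norm_of_cubic_eq_zero (by positivity) hlt_two hsec hz hne
  refine ⟨hcos, hsec, hcubic, hsqrt, fun z hz hne => ?_⟩
  rcases mul_eq_zero.1 hz with hz | hz
  · have hz2 : z ^ 2 = 2 := by simpa [sub_eq_zero] using hz
    rwa [norm_eq_sqrt_two_of_sq_eq_two hz2]
  · exact hcubic z hz hne
end

section
/- Let P : ℕ → ℝ be defined by P_N = 0 for N ≤ 4, P_5 = 1/24, P_6 = 1/48, P_7 = 7/96, and for N ≥ 8 by P_N = P_{N-1}/2 + P_{N-2}/2 - P_{N-3}/8 + s_N, where s_N = -(N-6)*2^{-(N+4)/2} for even N and s_N = (N-3)*2^{-(N+3)/2} for odd N. Then there exists a real constant A > 0 such that P_N / (cos(π/7))^N converges to A as N → ∞. -/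
open Real Filter

namespace TwoSidedSquareAux

noncomputable def c1 : ℝ := Real.cos (Real.pi / 7)
noncomputable def c2 : ℝ := Real.cos (3 * Real.pi / 7)
noncomputable def c3 : ℝ := Real.cos (5 * Real.pi / 7)
noncomputable def uu : ℝ := Real.sqrt 2 / 2
noncomputable def pa : ℝ := (Real.sqrt 2 - 2) / 4
noncomputable def pb : ℝ := 4 - 15 * Real.sqrt 2 / 4
noncomputable def pc : ℝ := -(Real.sqrt 2 + 2) / 4
noncomputable def pd : ℝ := 4 + 15 * Real.sqrt 2 / 4
noncomputable def Ac : ℝ :=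
  (55/96 - (c2 + c3) * (-11/48) + c2 * c3 * (31/24)) / (c1^5 * (c1 - c2) * (c1 - c3))
noncomputable def Bc : ℝ :=
  (55/96 - (c1 + c3) * (-11/48) + c1 * c3 * (31/24)) / (c2^5 * (c2 - c1) * (c2 - c3))
noncomputable def Cc : ℝ :=
  (55/96 - (c1 + c2) * (-11/48) + c1 * c2 * (31/24)) / (c3^5 * (c3 - c1) * (c3 - c2))
noncomputable def F (N : ℕ) : ℝ :=
  Ac * c1^N + Bc * c2^N + Cc * c3^N + (pa * N + pb) * uu^N + (pc * N + pd) * (-uu)^N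

lemma hs2 : (Real.sqrt 2) ^ 2 = 2 := Real.sq_sqrt (by norm_num)

lemma sqrt2_gt : (1.4 : ℝ) < Real.sqrt 2 := by
  nlinarith [hs2, Real.sqrt_nonneg 2]

lemma sqrt2_lt : Real.sqrt 2 < 1.5 := by
  nlinarith [hs2, Real.sqrt_nonneg 2]

/-- generic: if cos(7θ/2)=0 and cos θ ≠ -1 then cos θ is a root of 8x³-4x²-4x+1. -/
lemma root_of (θ : ℝ) (h7 : Real.cos (7 * θ / 2) = 0) (hne : Real.cos θ ≠ -1) :
    8 * (Real.cos θ)^3 - 4 * (Real.cos θ)^2 - 4 * Real.cos θ + 1 = 0 := by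
  have hsum : Real.cos (4 * θ) + Real.cos (3 * θ) = 0 := by
    rw [Real.cos_add_cos]
    rw [show (4 * θ + 3 * θ) / 2 = 7 * θ / 2 by ring, h7]
    ring
  have h4 : Real.cos (4 * θ) = 2 * (2 * (Real.cos θ)^2 - 1)^2 - 1 := by
    rw [show (4 : ℝ) * θ = 2 * (2 * θ) by ring, Real.cos_two_mul, Real.cos_two_mul]
  have h3 : Real.cos (3 * θ) = 4 * (Real.cos θ)^3 - 3 * Real.cos θ := Real.cos_three_mul θ
  have key : (Real.cos θ + 1) * (8 * (Real.cos θ)^3 - 4 * (Real.cos θ)^2 - 4 * Real.cos θ + 1)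
      = 0 := by linear_combination hsum - h4 - h3
  rcases mul_eq_zero.1 key with h | h
  · exact absurd (by linarith) hne
  · exact h

lemma pi7_pos : 0 < Real.pi / 7 := by positivity

-- ordering facts
lemma hc1_lt_one : c1 < 1 := by
  have := Real.cos_lt_cos_of_nonneg_of_le_pi (le_refl 0) (by linarith [Real.pi_pos])
    pi7_pos
  simpa [c1] using this

lemma huu_lt_c1 : uu < c1 := by
  have := Real.cos_lt_cos_of_nonneg_of_le_pi (by positivity : (0:ℝ) ≤ Real.pi / 7)
    (by linarith [Real.pi_pos]) (by linarith [Real.pi_pos] : Real.pi / 7 < Real.pi / 4)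
  rw [Real.cos_pi_div_four] at this
  simpa [c1, uu] using this

lemma huu_pos : 0 < uu := by
  have := sqrt2_gt; simp only [uu]; linarith

lemma hc1_pos : 0 < c1 := lt_trans huu_pos huu_lt_c1

lemma hc2_pos : 0 < c2 := by
  have := Real.cos_lt_cos_of_nonneg_of_le_pi
    (by positivity : (0:ℝ) ≤ 3 * Real.pi / 7) (by linarith [Real.pi_pos])
    (by linarith [Real.pi_pos] : 3 * Real.pi / 7 < Real.pi / 2)
  rw [Real.cos_pi_div_two] at this
  simpa [c2] using this

lemma hc2_lt_uu : c2 < uu := by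
  have := Real.cos_lt_cos_of_nonneg_of_le_pi
    (by positivity : (0:ℝ) ≤ Real.pi / 4) (by linarith [Real.pi_pos])
    (by linarith [Real.pi_pos] : Real.pi / 4 < 3 * Real.pi / 7)
  rw [Real.cos_pi_div_four] at this
  simpa [c2, uu] using this

lemma hc3_neg : c3 < 0 := by
  have := Real.cos_lt_cos_of_nonneg_of_le_pi
    (by positivity : (0:ℝ) ≤ Real.pi / 2) (by linarith [Real.pi_pos])
    (by linarith [Real.pi_pos] : Real.pi / 2 < 5 * Real.pi / 7)
  rw [Real.cos_pi_div_two] at this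
  simpa [c3] using this

lemma hneg_uu_lt_c3 : -uu < c3 := by
  have := Real.cos_lt_cos_of_nonneg_of_le_pi
    (by positivity : (0:ℝ) ≤ 5 * Real.pi / 7) (by linarith [Real.pi_pos])
    (by linarith [Real.pi_pos] : 5 * Real.pi / 7 < 3 * Real.pi / 4)
  have h34 : Real.cos (3 * Real.pi / 4) = -(Real.sqrt 2 / 2) := by
    rw [show 3 * Real.pi / 4 = Real.pi - Real.pi / 4 by ring, Real.cos_pi_sub,
      Real.cos_pi_div_four]
  rw [h34] at this
  simpa [c3, uu] using this

lemma hc2_lt_c1 : c2 < c1 := lt_trans hc2_lt_uu huu_lt_c1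
lemma hc3_lt_c2 : c3 < c2 := lt_trans hc3_neg hc2_pos
lemma hc3_lt_c1 : c3 < c1 := lt_trans hc3_lt_c2 hc2_lt_c1

-- cubic equations
lemma cubic1 : 8 * c1^3 - 4 * c1^2 - 4 * c1 + 1 = 0 := by
  apply root_of
  · rw [show 7 * (Real.pi / 7) / 2 = Real.pi / 2 by ring, Real.cos_pi_div_two]
  · have := hc1_pos; simp only [c1] at *; intro h; rw [h] at this; linarith

lemma cubic2 : 8 * c2^3 - 4 * c2^2 - 4 * c2 + 1 = 0 := by
  apply root_of
  · rw [show 7 * (3 * Real.pi / 7) / 2 = Real.pi / 2 + Real.pi by ring, Real.cos_add]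
    simp
  · have := hc2_pos; simp only [c2] at *; intro h; rw [h] at this; linarith

lemma cubic3 : 8 * c3^3 - 4 * c3^2 - 4 * c3 + 1 = 0 := by
  apply root_of
  · rw [show 7 * (5 * Real.pi / 7) / 2 = Real.pi / 2 + 2 * Real.pi by ring,
      Real.cos_add_two_pi, Real.cos_pi_div_two]
  · have h1 := hneg_uu_lt_c3
    have h2 := huu_pos
    have h3 : uu < 1 := lt_trans huu_lt_c1 hc1_lt_one
    simp only [c3, uu] at *; intro h; rw [h] at h1; linarith

lemma hc1_gt : (0.9 : ℝ) < c1 := by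
  have h1 := cubic1
  have h2 : (0.7 : ℝ) < c1 := by
    have := huu_lt_c1; have := sqrt2_gt; simp only [uu] at *; linarith
  nlinarith [sq_nonneg (c1 - 0.9), sq_nonneg c1]

lemma hc1_lt : c1 < (0.91 : ℝ) := by
  have h1 := cubic1
  have h2 : (0.7 : ℝ) < c1 := by
    have := huu_lt_c1; have := sqrt2_gt; simp only [uu] at *; linarith
  nlinarith [sq_nonneg (c1 - 0.91), sq_nonneg c1]

-- Vieta-style relations
lemma q_of (x : ℝ) (hx : 8 * x^3 - 4 * x^2 - 4 * x + 1 = 0) (hne : x ≠ c1) :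
    8 * x^2 + 8 * c1 * x + 8 * c1^2 - 4 * x - 4 * c1 - 4 = 0 := by
  have hmul : (x - c1) * (8 * x^2 + 8 * c1 * x + 8 * c1^2 - 4 * x - 4 * c1 - 4) = 0 := by
    linear_combination hx - cubic1
  exact (mul_eq_zero.1 hmul).resolve_left (sub_ne_zero.mpr hne)

lemma hsum : c2 + c3 = 1/2 - c1 := by
  have q2 := q_of c2 cubic2 (ne_of_lt hc2_lt_c1)
  have q3 := q_of c3 cubic3 (ne_of_lt hc3_lt_c1)
  have hmul : (c2 - c3) * (8 * (c2 + c3) + 8 * c1 - 4) = 0 := by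
    linear_combination q2 - q3
  have h := (mul_eq_zero.1 hmul).resolve_left (sub_ne_zero.mpr hc3_lt_c2.ne')
  linarith

lemma hprod : c2 * c3 = c1^2 - c1/2 - 1/2 := by
  have q2 := q_of c2 cubic2 (ne_of_lt hc2_lt_c1)
  have hsum' : c3 = 1/2 - c1 - c2 := by have := hsum; linarith
  linear_combination c2 * hsum' - (1/8) * q2

-- power recurrence from the cubic
lemma pow_rec (x : ℝ) (hx : 8 * x^3 - 4 * x^2 - 4 * x + 1 = 0) (n : ℕ) :
    x^(n+8) = x^(n+7)/2 + x^(n+6)/2 - x^(n+5)/8 := by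
  linear_combination (x^(n+5)/8) * hx

-- particular-part base values
lemma hpart5 : (pa * (5:ℕ) + pb) * uu^5 + (pc * (5:ℕ) + pd) * (-uu)^5 = -(5/4) := by
  simp only [pa, pb, pc, pd, uu]
  push_cast
  linear_combination (-(5/32) * (Real.sqrt 2)^4 - (5/16) * (Real.sqrt 2)^2 - 5/8) * hs2

lemma hpart6 : (pa * (6:ℕ) + pb) * uu^6 + (pc * (6:ℕ) + pd) * (-uu)^6 = 1/4 := by
  simp only [pa, pb, pc, pd, uu]
  push_cast
  linear_combination ((1/32) * (Real.sqrt 2)^4 + (1/16) * (Real.sqrt 2)^2 + 1/8) * hs2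

lemma hpart7 : (pa * (7:ℕ) + pb) * uu^7 + (pc * (7:ℕ) + pd) * (-uu)^7 = -(1/2) := by
  simp only [pa, pb, pc, pd, uu]
  push_cast
  linear_combination (-(1/32) * (Real.sqrt 2)^6 - (1/16) * (Real.sqrt 2)^4
    - (1/8) * (Real.sqrt 2)^2 - 1/4) * hs2

-- nonzero denominators
lemma hden : c1 ≠ 0 ∧ c2 ≠ 0 ∧ c3 ≠ 0 ∧ c1 - c2 ≠ 0 ∧ c1 - c3 ≠ 0 ∧ c2 - c3 ≠ 0 :=
  ⟨ne_of_gt hc1_pos, ne_of_gt hc2_pos, ne_of_lt hc3_neg,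
   sub_ne_zero.mpr hc2_lt_c1.ne', sub_ne_zero.mpr hc3_lt_c1.ne',
   sub_ne_zero.mpr hc3_lt_c2.ne'⟩

-- Lagrange base identities
lemma hLag5 : Ac * c1^5 + Bc * c2^5 + Cc * c3^5 = 31/24 := by
  obtain ⟨h1, h2, h3, h12, h13, h23⟩ := hden
  have h21 : c2 - c1 ≠ 0 := fun h => h12 (by linarith [sub_eq_zero.mp h])
  have h31 : c3 - c1 ≠ 0 := fun h => h13 (by linarith [sub_eq_zero.mp h])
  have h32 : c3 - c2 ≠ 0 := fun h => h23 (by linarith [sub_eq_zero.mp h])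
  simp only [Ac, Bc, Cc]
  field_simp
  ring

lemma hLag6 : Ac * c1^6 + Bc * c2^6 + Cc * c3^6 = -(11/48) := by
  obtain ⟨h1, h2, h3, h12, h13, h23⟩ := hden
  have h21 : c2 - c1 ≠ 0 := fun h => h12 (by linarith [sub_eq_zero.mp h])
  have h31 : c3 - c1 ≠ 0 := fun h => h13 (by linarith [sub_eq_zero.mp h])
  have h32 : c3 - c2 ≠ 0 := fun h => h23 (by linarith [sub_eq_zero.mp h])
  simp only [Ac, Bc, Cc]
  field_simp
  ring

lemma hLag7 : Ac * c1^7 + Bc * c2^7 + Cc * c3^7 = 55/96 := by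
  obtain ⟨h1, h2, h3, h12, h13, h23⟩ := hden
  have h21 : c2 - c1 ≠ 0 := fun h => h12 (by linarith [sub_eq_zero.mp h])
  have h31 : c3 - c1 ≠ 0 := fun h => h13 (by linarith [sub_eq_zero.mp h])
  have h32 : c3 - c2 ≠ 0 := fun h => h23 (by linarith [sub_eq_zero.mp h])
  simp only [Ac, Bc, Cc]
  field_simp
  ring

lemma hF5 : F 5 = 1/24 := by
  have := hLag5; have := hpart5
  simp only [F] at *
  push_cast at *
  linarith

lemma hF6 : F 6 = 1/48 := by
  have := hLag6; have := hpart6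
  simp only [F] at *
  push_cast at *
  linarith

lemma hF7 : F 7 = 7/96 := by
  have := hLag7; have := hpart7
  simp only [F] at *
  push_cast at *
  linarith

lemma huu_sq : uu * uu = 1/2 := by
  simp only [uu]; linear_combination (1/4) * hs2

lemma pow_split (x : ℝ) (hx : x * x = 1/2) (m j : ℕ) :
    x ^ (m + m + j) = (1/2 : ℝ)^m * x^j := by
  rw [pow_add, pow_add, ← mul_pow, hx]

/-- The key recurrence identity for F. -/
lemma hstep (k : ℕ) :
    F (k+8) = F (k+7)/2 + F (k+6)/2 - F (k+5)/8 +
      (if Even (k+8) then -(((k+8 : ℕ) : ℝ) - 6) * (1/2 : ℝ) ^ ((k+8+4)/2)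
       else (((k+8 : ℕ) : ℝ) - 3) * (1/2 : ℝ) ^ ((k+8+3)/2)) := by
  have e1 := pow_rec c1 cubic1 k
  have e2 := pow_rec c2 cubic2 k
  have e3 := pow_rec c3 cubic3 k
  have hnu : (-uu) * (-uu) = 1/2 := by rw [neg_mul_neg]; exact huu_sq
  rcases Nat.even_or_odd k with ⟨m, hm⟩ | ⟨m, hm⟩
  · subst hm
    have hev : Even (m+m+8) := ⟨m+4, by ring⟩
    rw [if_pos hev]
    rw [show (m+m+8+4)/2 = m+6 by omega]
    simp only [F]
    rw [e1, e2, e3]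
    rw [pow_split uu huu_sq m 8, pow_split uu huu_sq m 7, pow_split uu huu_sq m 6,
      pow_split uu huu_sq m 5, pow_split (-uu) hnu m 8, pow_split (-uu) hnu m 7,
      pow_split (-uu) hnu m 6, pow_split (-uu) hnu m 5]
    simp only [pa, pb, pc, pd, uu]
    push_cast
    linear_combination ((1/2:ℝ)^m * ((1/64) * (Real.sqrt 2)^6 - (3/256) * (m:ℝ) * (Real.sqrt 2)^6
      - (1/256) * (Real.sqrt 2)^4 - (1/256) * (m:ℝ) * (Real.sqrt 2)^4
      - (1/128) * (Real.sqrt 2)^2 - (1/128) * (m:ℝ) * (Real.sqrt 2)^2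
      - 1/64 - (m:ℝ)/64)) * hs2
  · subst hm
    have hodd : ¬ Even (2*m+1+8) := by rintro ⟨r, hr⟩; omega
    rw [if_neg hodd]
    rw [show (2*m+1+8+3)/2 = m+6 by omega]
    simp only [F]
    rw [e1, e2, e3]
    rw [show 2*m+1+8 = m+m+9 by omega, show 2*m+1+7 = m+m+8 by omega,
      show 2*m+1+6 = m+m+7 by omega, show 2*m+1+5 = m+m+6 by omega]
    rw [pow_split uu huu_sq m 9, pow_split uu huu_sq m 8, pow_split uu huu_sq m 7,
      pow_split uu huu_sq m 6, pow_split (-uu) hnu m 9, pow_split (-uu) hnu m 8,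
      pow_split (-uu) hnu m 7, pow_split (-uu) hnu m 6]
    simp only [pa, pb, pc, pd, uu]
    push_cast
    linear_combination ((1/2:ℝ)^m * (-(3/512) * (Real.sqrt 2)^8 + (1/512) * (m:ℝ) * (Real.sqrt 2)^8
      + (1/256) * (Real.sqrt 2)^6 + (1/256) * (m:ℝ) * (Real.sqrt 2)^6
      + (3/256) * (Real.sqrt 2)^4 + (1/256) * (m:ℝ) * (Real.sqrt 2)^4
      + (3/128) * (Real.sqrt 2)^2 + (1/128) * (m:ℝ) * (Real.sqrt 2)^2
      + 3/64 + (m:ℝ)/64)) * hs2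

lemma hA_pos : 0 < Ac := by
  have hnum : 0 < 55/96 - (c2 + c3) * (-11/48) + c2 * c3 * (31/24) := by
    rw [hsum, hprod]
    nlinarith [hc1_gt, hc1_lt]
  have hden' : 0 < c1^5 * (c1 - c2) * (c1 - c3) := by
    have h1 := hc1_pos; have h2 := hc2_lt_c1; have h3 := hc3_lt_c1
    apply mul_pos (mul_pos (pow_pos h1 5) (by linarith)) (by linarith)
  exact div_pos hnum hden'

end TwoSidedSquareAux

open TwoSidedSquareAux in
/-- The trapping probability distribution on the two-sided square ladder decays
asymptotically as `A · cos(π/7)^N` for some constant `A > 0`. -/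
theorem trapping_length_asymptotics_two_sided_square (P : ℕ → ℝ)
    (h0 : ∀ N ≤ 4, P N = 0)
    (h5 : P 5 = 1 / 24) (h6 : P 6 = 1 / 48) (h7 : P 7 = 7 / 96)
    (hrec : ∀ N : ℕ, 8 ≤ N →
      P N = P (N - 1) / 2 + P (N - 2) / 2 - P (N - 3) / 8 +
        (if Even N then -((N : ℝ) - 6) * (1 / 2 : ℝ) ^ ((N + 4) / 2)
         else ((N : ℝ) - 3) * (1 / 2 : ℝ) ^ ((N + 3) / 2))) :
    ∃ A : ℝ, 0 < A ∧
      Filter.Tendsto (fun N : ℕ => P N / Real.cos (Real.pi / 7) ^ N)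
        Filter.atTop (nhds A) := by
  -- P agrees with the closed form F from N = 5 on
  have key : ∀ k : ℕ, P (k+5) = F (k+5) ∧ P (k+6) = F (k+6) ∧ P (k+7) = F (k+7) := by
    intro k
    induction k with
    | zero =>
      refine ⟨?_, ?_, ?_⟩
      · show P 5 = F 5; rw [h5, hF5]
      · show P 6 = F 6; rw [h6, hF6]
      · show P 7 = F 7; rw [h7, hF7]
    | succ k ih =>
      obtain ⟨ih5, ih6, ih7⟩ := ih
      refine ⟨ih6, ih7, ?_⟩
      show P (k+8) = F (k+8)
      have hr := hrec (k+8) (by omega)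
      rw [show k+8-1 = k+7 from rfl, show k+8-2 = k+6 from rfl,
        show k+8-3 = k+5 from rfl] at hr
      rw [hr, ih5, ih6, ih7]
      exact (hstep k).symm
  have heq : ∀ N, 5 ≤ N → P N = F N := by
    intro N hN
    obtain ⟨k, rfl⟩ : ∃ k, N = k + 5 := ⟨N - 5, by omega⟩
    exact (key k).1
  refine ⟨Ac, hA_pos, ?_⟩
  have hc1ne : ∀ N : ℕ, (c1 : ℝ)^N ≠ 0 := fun N => pow_ne_zero _ (ne_of_gt hc1_pos)
  -- rewrite F N / c1^N
  have hrw : ∀ N : ℕ, F N / c1^N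
      = Ac + (Bc * (c2/c1)^N + Cc * (c3/c1)^N
        + (pa * N + pb) * (uu/c1)^N + (pc * N + pd) * ((-uu)/c1)^N) := by
    intro N
    have h := hc1ne N
    simp only [F, div_pow]
    field_simp
    ring
  -- the limit of the rewritten form
  have habs : ∀ x : ℝ, -c1 < x → x < c1 → |x / c1| < 1 := by
    intro x hx1 hx2
    rw [abs_div, abs_of_pos hc1_pos, div_lt_one hc1_pos, abs_lt]
    exact ⟨hx1, hx2⟩
  have hx2 : |c2 / c1| < 1 := habs c2 (by linarith [hc2_pos, hc1_pos]) hc2_lt_c1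
  have hx3 : |c3 / c1| < 1 := habs c3 (by linarith [hneg_uu_lt_c3, huu_lt_c1]) hc3_lt_c1
  have hxu : |uu / c1| < 1 := habs uu (by linarith [huu_pos, hc1_pos]) huu_lt_c1
  have hxnu : |(-uu) / c1| < 1 := habs (-uu) (by linarith [huu_lt_c1]) (by linarith [huu_pos, hc1_pos])
  have t2 : Tendsto (fun N : ℕ => Bc * (c2/c1)^N) atTop (nhds 0) := by
    simpa using (tendsto_pow_atTop_nhds_zero_of_abs_lt_one hx2).const_mul Bc
  have t3 : Tendsto (fun N : ℕ => Cc * (c3/c1)^N) atTop (nhds 0) := by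
    simpa using (tendsto_pow_atTop_nhds_zero_of_abs_lt_one hx3).const_mul Cc
  have tlin : ∀ (e f x : ℝ), |x| < 1 →
      Tendsto (fun N : ℕ => (e * N + f) * x^N) atTop (nhds 0) := by
    intro e f x hx
    have h1 : Tendsto (fun N : ℕ => e * ((N : ℝ) * x^N)) atTop (nhds 0) := by
      simpa using (tendsto_self_mul_const_pow_of_abs_lt_one hx).const_mul e
    have h2 : Tendsto (fun N : ℕ => f * x^N) atTop (nhds 0) := by
      simpa using (tendsto_pow_atTop_nhds_zero_of_abs_lt_one hx).const_mul f
    have := h1.add h2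
    simp only [add_zero] at this
    exact this.congr (fun N => by ring)
  have tu := tlin pa pb (uu/c1) hxu
  have tnu := tlin pc pd ((-uu)/c1) hxnu
  have hsumlim : Tendsto (fun N : ℕ => Bc * (c2/c1)^N + Cc * (c3/c1)^N
      + (pa * N + pb) * (uu/c1)^N + (pc * N + pd) * ((-uu)/c1)^N) atTop (nhds 0) := by
    have := ((t2.add t3).add tu).add tnu
    simpa using this
  have hFlim : Tendsto (fun N : ℕ => F N / c1^N) atTop (nhds Ac) := by
    have := (tendsto_const_nhds (x := Ac) (f := atTop (α := ℕ))).add hsumlim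
    rw [add_zero] at this
    exact this.congr fun N => (hrw N).symm
  -- transfer to P via eventual equality
  have hev : (fun N : ℕ => F N / c1^N) =ᶠ[atTop] (fun N : ℕ => P N / c1^N) := by
    filter_upwards [eventually_ge_atTop 5] with N hN
    rw [heq N hN]
  have := hFlim.congr' hev
  simpa only [c1] using this
end

section
/- With P : ℕ → ℝ defined by P_N = 0 for N ≤ 3, P_4 = 1/54, P_5 = 11/324, P_6 = 43/972, P_7 = 95/1944, and for N ≥ 8 by P_N = (5/6)*P_{N-1} - (1/18)*P_{N-2} + (1/6)*P_{N-3} - (1/36)*P_{N-4} + (1/16)*s_N, where s_N = ((5/2)*N + 7)*3^{-(N+2)/2} for even N and s_N = ((3/2)*N + 7/2)*3^{-(N+1)/2} for odd N: the series ∑_{N=0}^∞ P_N converges to 1, the series ∑_{N=0}^∞ N * P_N converges to 941/48, and ∑_{N=0}^∞ N^2 * P_N - (941/48)^2 = 51919/256. -/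
set_option maxHeartbeats 1600000


/-- the source (forcing) term of the recurrence -/
noncomputable def srcQ (N : ℕ) : ℝ :=
  if Even N then ((5 / 2) * (N : ℝ) + 7) * (1 / 3 : ℝ) ^ ((N + 2) / 2)
  else ((3 / 2) * (N : ℝ) + 7 / 2) * (1 / 3 : ℝ) ^ ((N + 1) / 2)

lemma srcQ_even (k : ℕ) : srcQ (2 * k + 8) = ((5 : ℝ) * k + 27) * (1 / 3 : ℝ) ^ (k + 5) := by
  rw [srcQ, if_pos ⟨k + 4, by omega⟩, show (2 * k + 8 + 2) / 2 = k + 5 from by omega]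
  push_cast; ring

lemma srcQ_odd (k : ℕ) : srcQ (2 * k + 9) = ((3 : ℝ) * k + 17) * (1 / 3 : ℝ) ^ (k + 5) := by
  have hodd : ¬ Even (2 * k + 9) := by
    simp [Nat.even_add_one, parity_simps]
  rw [srcQ, if_neg hodd, show (2 * k + 9 + 1) / 2 = k + 5 from by omega]
  push_cast; ring

lemma aux_k_pow {t : ℝ} (h0 : 0 ≤ t) (h1 : t ≤ 2 / 3) : ∀ k : ℕ, (k : ℝ) * t ^ k ≤ 2 := by
  intro k
  induction k with
  | zero => norm_num
  | succ n ih =>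
    have hp : t ^ n ≤ 1 := pow_le_one₀ h0 (h1.trans (by norm_num))
    have hpn : (0:ℝ) ≤ t ^ n := pow_nonneg h0 n
    have h2 : (n : ℝ) * t ^ n * t ≤ 2 * t := by nlinarith
    have h3 : t ^ n * t ≤ t := by nlinarith
    push_cast
    rw [pow_succ]
    nlinarith

lemma aux2 (c : ℝ) (hc : 0 ≤ c) (k : ℕ) :
    ((k : ℝ) + c) * (3 / 5 : ℝ) ^ k ≤ (2 + c) * (49 / 50 : ℝ) ^ k := by
  have h1 : (3 / 5 : ℝ) ^ k = (30 / 49 : ℝ) ^ k * (49 / 50 : ℝ) ^ k := by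
    rw [← mul_pow]; norm_num
  have h2 := aux_k_pow (t := 30 / 49) (by norm_num) (by norm_num) k
  have h3 : (30 / 49 : ℝ) ^ k ≤ 1 := pow_le_one₀ (by norm_num) (by norm_num)
  have h4 : (0 : ℝ) ≤ (49 / 50 : ℝ) ^ k := by positivity
  have h5 : (0 : ℝ) ≤ (30 / 49 : ℝ) ^ k := by positivity
  rw [h1]
  nlinarith [mul_nonneg (mul_nonneg hc (sub_nonneg.2 h3)) h4,
    mul_nonneg (sub_nonneg.2 h2) h4]

lemma srcQ_bound (N : ℕ) : |srcQ N| ≤ ((N : ℝ) + 3) * (3 / 5 : ℝ) ^ N := by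
  rcases Nat.even_or_odd N with ⟨m, hm⟩ | ⟨m, hm⟩
  · subst hm
    rw [srcQ, if_pos ⟨m, rfl⟩, show (m + m + 2) / 2 = m + 1 from by omega,
      abs_of_nonneg (by positivity)]
    have h1 : (1 / 3 : ℝ) ^ m ≤ (9 / 25 : ℝ) ^ m := pow_le_pow_left₀ (by norm_num) (by norm_num) m
    have h2 : (3 / 5 : ℝ) ^ (m + m) = (9 / 25 : ℝ) ^ m := by
      rw [show m + m = 2 * m from by ring, pow_mul]; norm_num
    rw [h2]
    have h3 : (0:ℝ) ≤ (1/3:ℝ) ^ m := by positivity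
    have h4 : (2*(m:ℝ)+3) * (1/3:ℝ)^m ≤ (2*(m:ℝ)+3) * (9/25:ℝ)^m :=
      mul_le_mul_of_nonneg_left h1 (by positivity)
    have h5 : (0:ℝ) ≤ ((m:ℝ)+2) * (1/3:ℝ)^m := by positivity
    push_cast
    rw [pow_succ]
    nlinarith
  · subst hm
    have hodd : ¬ Even (2 * m + 1) := by simp [Nat.even_add_one, parity_simps]
    rw [srcQ, if_neg hodd, show (2 * m + 1 + 1) / 2 = m + 1 from by omega,
      abs_of_nonneg (by positivity)]
    have h1 : (1 / 3 : ℝ) ^ m ≤ (9 / 25 : ℝ) ^ m := pow_le_pow_left₀ (by norm_num) (by norm_num) m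
    have h2 : (3 / 5 : ℝ) ^ (2 * m + 1) = (3/5) * (9 / 25 : ℝ) ^ m := by
      rw [pow_succ, pow_mul]; norm_num; ring
    rw [h2]
    have h3 : (0:ℝ) ≤ (1/3:ℝ) ^ m := by positivity
    have h4 : ((6/5)*(m:ℝ)+12/5) * (1/3:ℝ)^m ≤ ((6/5)*(m:ℝ)+12/5) * (9/25:ℝ)^m :=
      mul_le_mul_of_nonneg_left h1 (by positivity)
    have h5 : (0:ℝ) ≤ ((7/10)*(m:ℝ)+11/10) * (1/3:ℝ)^m := by positivity
    push_cast
    rw [pow_succ]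
    nlinarith


lemma g0 : HasSum (fun n : ℕ => (1 / 3 : ℝ) ^ n) (3 / 2) := by
  have h := hasSum_geometric_of_lt_one (by norm_num : (0:ℝ) ≤ 1/3) (by norm_num)
  rw [show ((1 : ℝ) - 1/3)⁻¹ = 3/2 from by norm_num] at h
  exact h

lemma g1 : HasSum (fun n : ℕ => (n : ℝ) * (1 / 3 : ℝ) ^ n) (3 / 4) := by
  have h := hasSum_coe_mul_geometric_of_norm_lt_one
    (r := (1/3 : ℝ)) (by rw [Real.norm_eq_abs, abs_of_nonneg (by norm_num : (0:ℝ) ≤ 1/3)]; norm_num)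
  rw [show (1/3 : ℝ) / (1 - 1/3) ^ 2 = 3/4 from by norm_num] at h
  exact h

lemma g2 : HasSum (fun n : ℕ => (n : ℝ) ^ 2 * (1 / 3 : ℝ) ^ n) (3 / 2) := by
  obtain ⟨C, hC⟩ := summable_pow_mul_geometric_of_norm_lt_one
    (R := ℝ) 2 (r := (1/3 : ℝ)) (by rw [Real.norm_eq_abs, abs_of_nonneg (by norm_num : (0:ℝ) ≤ 1/3)]; norm_num)
  have gs := (hasSum_nat_add_iff' (f := fun n : ℕ => (n : ℝ) ^ 2 * (1 / 3 : ℝ) ^ n) 1).mpr hC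
  simp only [Finset.sum_range_one, Nat.cast_zero] at gs
  norm_num at gs
  have comb := ((hC.add ((g1.mul_left 2).add g0)).mul_left (1/3 : ℝ))
  have hfun : (fun n : ℕ => ((n : ℝ) + 1) ^ 2 * (1 / 3 : ℝ) ^ (n + 1))
      = fun n : ℕ => (1/3 : ℝ) * ((n : ℝ) ^ 2 * (1 / 3 : ℝ) ^ n
          + (2 * ((n : ℝ) * (1 / 3 : ℝ) ^ n) + (1 / 3 : ℝ) ^ n)) := by
    funext n; ring
  have key : C = (1/3 : ℝ) * (C + (2 * (3/4) + 3/2)) := by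
    refine HasSum.unique ?_ comb
    rw [← hfun]
    (convert gs using 2 with n) <;> (push_cast; ring)
  have hCval : C = 3/2 := by linarith
  rwa [hCval] at hC

lemma g3 : HasSum (fun n : ℕ => (n : ℝ) ^ 3 * (1 / 3 : ℝ) ^ n) (33 / 8) := by
  obtain ⟨C, hC⟩ := summable_pow_mul_geometric_of_norm_lt_one
    (R := ℝ) 3 (r := (1/3 : ℝ)) (by rw [Real.norm_eq_abs, abs_of_nonneg (by norm_num : (0:ℝ) ≤ 1/3)]; norm_num)
  have gs := (hasSum_nat_add_iff' (f := fun n : ℕ => (n : ℝ) ^ 3 * (1 / 3 : ℝ) ^ n) 1).mpr hC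
  simp only [Finset.sum_range_one, Nat.cast_zero] at gs
  norm_num at gs
  have comb := ((hC.add ((g2.mul_left 3).add ((g1.mul_left 3).add g0))).mul_left (1/3 : ℝ))
  have hfun : (fun n : ℕ => ((n : ℝ) + 1) ^ 3 * (1 / 3 : ℝ) ^ (n + 1))
      = fun n : ℕ => (1/3 : ℝ) * ((n : ℝ) ^ 3 * (1 / 3 : ℝ) ^ n
          + (3 * ((n : ℝ) ^ 2 * (1 / 3 : ℝ) ^ n)
            + (3 * ((n : ℝ) * (1 / 3 : ℝ) ^ n) + (1 / 3 : ℝ) ^ n))) := by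
    funext n; ring
  have key : C = (1/3 : ℝ) * (C + (3 * (3/2) + (3 * (3/4) + 3/2))) := by
    refine HasSum.unique ?_ comb
    rw [← hfun]
    (convert gs using 2 with n) <;> (push_cast; ring)
  have hCval : C = 33/8 := by linarith
  rwa [hCval] at hC

-- forcing sums
lemma FQ0 : HasSum (fun i : ℕ => srcQ (i + 8)) (59/324 + 37/324) := by
  refine HasSum.even_add_odd (f := fun i : ℕ => srcQ (i + 8)) ?_ ?_
  · show HasSum (fun k : ℕ => srcQ (2 * k + 8)) _
    rw [show (fun k : ℕ => srcQ (2 * k + 8))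
        = fun k : ℕ => (1/3 : ℝ)^5 * (5 * ((k : ℝ) * (1/3 : ℝ)^k) + 27 * (1/3 : ℝ)^k) from
      funext fun k => by rw [srcQ_even]; ring,
      show (59/324 : ℝ) = (1/3 : ℝ)^5 * (5 * (3/4) + 27 * (3/2)) from by norm_num]
    exact ((g1.mul_left 5).add (g0.mul_left 27)).mul_left _
  · show HasSum (fun k : ℕ => srcQ (2 * k + 1 + 8)) _
    rw [show (fun k : ℕ => srcQ (2 * k + 1 + 8))
        = fun k : ℕ => (1/3 : ℝ)^5 * (3 * ((k : ℝ) * (1/3 : ℝ)^k) + 17 * (1/3 : ℝ)^k) from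
      funext fun k => by rw [show 2*k+1+8 = 2*k+9 from by omega, srcQ_odd]; ring,
      show (37/324 : ℝ) = (1/3 : ℝ)^5 * (3 * (3/4) + 17 * (3/2)) from by norm_num]
    exact ((g1.mul_left 3).add (g0.mul_left 17)).mul_left _

lemma FQ1 : HasSum (fun i : ℕ => ((i + 8 : ℕ) : ℝ) * srcQ (i + 8)) (91/54 + 379/324) := by
  refine HasSum.even_add_odd (f := fun i : ℕ => ((i + 8 : ℕ) : ℝ) * srcQ (i + 8)) ?_ ?_
  · show HasSum (fun k : ℕ => ((2 * k + 8 : ℕ) : ℝ) * srcQ (2 * k + 8)) _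
    rw [show (fun k : ℕ => ((2 * k + 8 : ℕ) : ℝ) * srcQ (2 * k + 8))
        = fun k : ℕ => (1/3 : ℝ)^5 * (10 * ((k : ℝ)^2 * (1/3 : ℝ)^k)
            + (94 * ((k : ℝ) * (1/3 : ℝ)^k) + 216 * (1/3 : ℝ)^k)) from
      funext fun k => by rw [srcQ_even]; push_cast; ring,
      show (91/54 : ℝ) = (1/3 : ℝ)^5 * (10 * (3/2) + (94 * (3/4) + 216 * (3/2))) from by norm_num]
    exact ((g2.mul_left 10).add ((g1.mul_left 94).add (g0.mul_left 216))).mul_left _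
  · show HasSum (fun k : ℕ => ((2 * k + 1 + 8 : ℕ) : ℝ) * srcQ (2 * k + 1 + 8)) _
    rw [show (fun k : ℕ => ((2 * k + 1 + 8 : ℕ) : ℝ) * srcQ (2 * k + 1 + 8))
        = fun k : ℕ => (1/3 : ℝ)^5 * (6 * ((k : ℝ)^2 * (1/3 : ℝ)^k)
            + (61 * ((k : ℝ) * (1/3 : ℝ)^k) + 153 * (1/3 : ℝ)^k)) from
      funext fun k => by rw [show 2*k+1+8 = 2*k+9 from by omega, srcQ_odd]; push_cast; ring,
      show (379/324 : ℝ) = (1/3 : ℝ)^5 * (6 * (3/2) + (61 * (3/4) + 153 * (3/2))) from by norm_num]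
    exact ((g2.mul_left 6).add ((g1.mul_left 61).add (g0.mul_left 153))).mul_left _

lemma FQ2 : HasSum (fun i : ℕ => ((i + 8 : ℕ) : ℝ)^2 * srcQ (i + 8)) (881/54 + 4027/324) := by
  refine HasSum.even_add_odd (f := fun i : ℕ => ((i + 8 : ℕ) : ℝ)^2 * srcQ (i + 8)) ?_ ?_
  · show HasSum (fun k : ℕ => ((2 * k + 8 : ℕ) : ℝ)^2 * srcQ (2 * k + 8)) _
    rw [show (fun k : ℕ => ((2 * k + 8 : ℕ) : ℝ)^2 * srcQ (2 * k + 8))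
        = fun k : ℕ => (1/3 : ℝ)^5 * (20 * ((k : ℝ)^3 * (1/3 : ℝ)^k)
            + (268 * ((k : ℝ)^2 * (1/3 : ℝ)^k)
              + (1184 * ((k : ℝ) * (1/3 : ℝ)^k) + 1728 * (1/3 : ℝ)^k))) from
      funext fun k => by rw [srcQ_even]; push_cast; ring,
      show (881/54 : ℝ) = (1/3 : ℝ)^5 * (20 * (33/8) + (268 * (3/2)
        + (1184 * (3/4) + 1728 * (3/2)))) from by norm_num]
    exact ((g3.mul_left 20).add ((g2.mul_left 268).add
      ((g1.mul_left 1184).add (g0.mul_left 1728)))).mul_left _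
  · show HasSum (fun k : ℕ => ((2 * k + 1 + 8 : ℕ) : ℝ)^2 * srcQ (2 * k + 1 + 8)) _
    rw [show (fun k : ℕ => ((2 * k + 1 + 8 : ℕ) : ℝ)^2 * srcQ (2 * k + 1 + 8))
        = fun k : ℕ => (1/3 : ℝ)^5 * (12 * ((k : ℝ)^3 * (1/3 : ℝ)^k)
            + (176 * ((k : ℝ)^2 * (1/3 : ℝ)^k)
              + (855 * ((k : ℝ) * (1/3 : ℝ)^k) + 1377 * (1/3 : ℝ)^k))) from
      funext fun k => by rw [show 2*k+1+8 = 2*k+9 from by omega, srcQ_odd]; push_cast; ring,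
      show (4027/324 : ℝ) = (1/3 : ℝ)^5 * (12 * (33/8) + (176 * (3/2)
        + (855 * (3/4) + 1377 * (3/2)))) from by norm_num]
    exact ((g3.mul_left 12).add ((g2.mul_left 176).add
      ((g1.mul_left 855).add (g0.mul_left 1377)))).mul_left _

lemma srcQ8 : srcQ 8 = 1 / 9 := by
  have h := srcQ_even 0
  norm_num at h
  exact h

lemma Pbound (P : ℕ → ℝ)
    (h0 : ∀ N ≤ 3, P N = 0)
    (h4 : P 4 = 1 / 54) (h5 : P 5 = 11 / 324) (h6 : P 6 = 43 / 972) (h7 : P 7 = 95 / 1944)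
    (hrec : ∀ N : ℕ, 8 ≤ N →
      P N = (5 / 6) * P (N - 1) - (1 / 18) * P (N - 2) + (1 / 6) * P (N - 3)
          - (1 / 36) * P (N - 4) + (1 / 16) * srcQ N)
    :
    ∀ N, |P N| ≤ 3 * (49 / 50 : ℝ) ^ N := by
  have hP8 : P 8 = 881 / 17496 := by
    have h := hrec 8 (by norm_num)
    norm_num [h4, h5, h6, h7, srcQ8] at h
    linarith
  intro N
  induction N using Nat.strong_induction_on with
  | _ N ih =>
    rcases lt_or_ge N 9 with hN | hN
    · interval_cases N
      · rw [h0 0 (by norm_num)]; norm_num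
      · rw [h0 1 (by norm_num)]; norm_num
      · rw [h0 2 (by norm_num)]; norm_num
      · rw [h0 3 (by norm_num)]; norm_num
      · rw [h4, abs_of_nonneg (by norm_num)]; norm_num
      · rw [h5, abs_of_nonneg (by norm_num)]; norm_num
      · rw [h6, abs_of_nonneg (by norm_num)]; norm_num
      · rw [h7, abs_of_nonneg (by norm_num)]; norm_num
      · rw [hP8, abs_of_nonneg (by norm_num)]; norm_num
    · obtain ⟨k, rfl⟩ : ∃ k, N = k + 9 := ⟨N - 9, by omega⟩
      have e1 := hrec (k + 9) (by omega)
      have e2 := hrec (k + 8) (by omega)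
      rw [show k + 9 - 1 = k + 8 from by omega, show k + 9 - 2 = k + 7 from by omega,
        show k + 9 - 3 = k + 6 from by omega, show k + 9 - 4 = k + 5 from by omega] at e1
      rw [show k + 8 - 1 = k + 7 from by omega, show k + 8 - 2 = k + 6 from by omega,
        show k + 8 - 3 = k + 5 from by omega, show k + 8 - 4 = k + 4 from by omega] at e2
      rw [e2] at e1
      have b7 : |P (k + 7)| ≤ 3 * ((49 / 50 : ℝ) ^ k * (49 / 50) ^ 7) := by
        have := ih (k + 7) (by omega); rwa [pow_add] at this
      have b6 : |P (k + 6)| ≤ 3 * ((49 / 50 : ℝ) ^ k * (49 / 50) ^ 6) := by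
        have := ih (k + 6) (by omega); rwa [pow_add] at this
      have b5 : |P (k + 5)| ≤ 3 * ((49 / 50 : ℝ) ^ k * (49 / 50) ^ 5) := by
        have := ih (k + 5) (by omega); rwa [pow_add] at this
      have b4 : |P (k + 4)| ≤ 3 * ((49 / 50 : ℝ) ^ k * (49 / 50) ^ 4) := by
        have := ih (k + 4) (by omega); rwa [pow_add] at this
      have F9 : |srcQ (k + 9)| ≤ 14 * (3 / 5 : ℝ) ^ 9 * (49 / 50) ^ k := by
        have h1 := srcQ_bound (k + 9)
        have h2 : (((k + 9 : ℕ) : ℝ) + 3) * (3 / 5 : ℝ) ^ (k + 9)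
            = (((k : ℝ) + 12) * (3 / 5) ^ k) * (3 / 5) ^ 9 := by
          rw [pow_add]; push_cast; ring
        rw [h2] at h1
        calc |srcQ (k + 9)| ≤ (((k : ℝ) + 12) * (3 / 5) ^ k) * (3 / 5) ^ 9 := h1
          _ ≤ ((2 + 12) * (49 / 50 : ℝ) ^ k) * (3 / 5) ^ 9 :=
              mul_le_mul_of_nonneg_right (aux2 12 (by norm_num) k) (by positivity)
          _ = 14 * (3 / 5 : ℝ) ^ 9 * (49 / 50) ^ k := by ring
      have F8 : |srcQ (k + 8)| ≤ 13 * (3 / 5 : ℝ) ^ 8 * (49 / 50) ^ k := by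
        have h1 := srcQ_bound (k + 8)
        have h2 : (((k + 8 : ℕ) : ℝ) + 3) * (3 / 5 : ℝ) ^ (k + 8)
            = (((k : ℝ) + 11) * (3 / 5) ^ k) * (3 / 5) ^ 8 := by
          rw [pow_add]; push_cast; ring
        rw [h2] at h1
        calc |srcQ (k + 8)| ≤ (((k : ℝ) + 11) * (3 / 5) ^ k) * (3 / 5) ^ 8 := h1
          _ ≤ ((2 + 11) * (49 / 50 : ℝ) ^ k) * (3 / 5) ^ 8 :=
              mul_le_mul_of_nonneg_right (aux2 11 (by norm_num) k) (by positivity)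
          _ = 13 * (3 / 5 : ℝ) ^ 8 * (49 / 50) ^ k := by ring
      have ht : (0 : ℝ) ≤ (49 / 50 : ℝ) ^ k := by positivity
      rw [abs_le] at b7 b6 b5 b4 F9 F8
      rw [pow_add, abs_le, e1]
      constructor
      · linarith [b7.1, b7.2, b6.1, b6.2, b5.1, b5.2, b4.1, b4.2, F9.1, F9.2, F8.1, F8.2, ht]
      · linarith [b7.1, b7.2, b6.1, b6.2, b5.1, b5.2, b4.1, b4.2, F9.1, F9.2, F8.1, F8.2, ht]

/-- A GSAW on the two-sided triangular ladder becomes trapped with probability 1, after a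
mean of `941/48` steps with variance `51919/256`. -/
theorem trapping_length_moments_two_sided_triangular (P : ℕ → ℝ)
    (h0 : ∀ N ≤ 3, P N = 0)
    (h4 : P 4 = 1 / 54) (h5 : P 5 = 11 / 324) (h6 : P 6 = 43 / 972) (h7 : P 7 = 95 / 1944)
    (hrec : ∀ N : ℕ, 8 ≤ N →
      P N = (5 / 6) * P (N - 1) - (1 / 18) * P (N - 2) + (1 / 6) * P (N - 3)
          - (1 / 36) * P (N - 4) +
        (1 / 16) *
          (if Even N then ((5 / 2) * (N : ℝ) + 7) * (1 / 3 : ℝ) ^ ((N + 2) / 2)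
           else ((3 / 2) * (N : ℝ) + 7 / 2) * (1 / 3 : ℝ) ^ ((N + 1) / 2))) :
    HasSum P 1 ∧
    HasSum (fun N : ℕ => (N : ℝ) * P N) (941 / 48) ∧
    HasSum (fun N : ℕ => (N : ℝ) ^ 2 * P N) (51919 / 256 + (941 / 48) ^ 2) := by
  have hrecQ : ∀ N : ℕ, 8 ≤ N →
      P N = (5 / 6) * P (N - 1) - (1 / 18) * P (N - 2) + (1 / 6) * P (N - 3)
          - (1 / 36) * P (N - 4) + (1 / 16) * srcQ N := by
    intro N hN
    unfold srcQ
    exact hrec N hN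

  have hb := Pbound P h0 h4 h5 h6 h7 hrecQ
  have z0 : P 0 = 0 := h0 0 (by norm_num)
  have z1 : P 1 = 0 := h0 1 (by norm_num)
  have z2 : P 2 = 0 := h0 2 (by norm_num)
  have z3 : P 3 = 0 := h0 3 (by norm_num)
  -- summability
  have hgeo0 : Summable (fun n : ℕ => 3 * (49/50 : ℝ)^n) :=
    (summable_geometric_of_lt_one (by norm_num) (by norm_num)).mul_left 3
  have sum0 : Summable P :=
    Summable.of_norm (Summable.of_nonneg_of_le (fun n => norm_nonneg _)
      (fun n => by rw [Real.norm_eq_abs]; exact hb n) hgeo0)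
  have hr : ‖(49/50 : ℝ)‖ < 1 := by
    rw [Real.norm_eq_abs, abs_of_nonneg (by norm_num : (0:ℝ) ≤ 49/50)]; norm_num
  have hgeo1 : Summable (fun n : ℕ => 3 * ((n:ℝ) * (49/50 : ℝ)^n)) := by
    have h := summable_pow_mul_geometric_of_norm_lt_one (R := ℝ) 1 hr
    simpa [pow_one] using h.mul_left 3
  have sum1 : Summable (fun N : ℕ => (N:ℝ) * P N) :=
    Summable.of_norm (Summable.of_nonneg_of_le (fun n => norm_nonneg _)
      (fun n => by
        rw [Real.norm_eq_abs, abs_mul, abs_of_nonneg (by positivity : (0:ℝ) ≤ (n:ℝ))]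
        calc (n:ℝ) * |P n| ≤ (n:ℝ) * (3*(49/50)^n) :=
              mul_le_mul_of_nonneg_left (hb n) (by positivity)
          _ = 3*((n:ℝ)*(49/50)^n) := by ring) hgeo1)
  have hgeo2 : Summable (fun n : ℕ => 3 * ((n:ℝ)^2 * (49/50 : ℝ)^n)) := by
    have h := summable_pow_mul_geometric_of_norm_lt_one (R := ℝ) 2 hr
    simpa using h.mul_left 3
  have sum2 : Summable (fun N : ℕ => (N:ℝ)^2 * P N) :=
    Summable.of_norm (Summable.of_nonneg_of_le (fun n => norm_nonneg _)
      (fun n => by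
        rw [Real.norm_eq_abs, abs_mul, abs_of_nonneg (by positivity : (0:ℝ) ≤ (n:ℝ)^2)]
        calc (n:ℝ)^2 * |P n| ≤ (n:ℝ)^2 * (3*(49/50)^n) :=
              mul_le_mul_of_nonneg_left (hb n) (by positivity)
          _ = 3*((n:ℝ)^2*(49/50)^n) := by ring) hgeo2)
  obtain ⟨S0, hS0⟩ := sum0
  obtain ⟨S1, hS1⟩ := sum1
  obtain ⟨S2, hS2⟩ := sum2
  -- tails
  have T0_8 : HasSum (fun i : ℕ => P (i+8)) (S0 - 283/1944) := by
    have h := (hasSum_nat_add_iff' (f := P) 8).mpr hS0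
    rw [show (∑ i ∈ Finset.range 8, P i) = 283/1944 from by
      norm_num [Finset.sum_range_succ, z0, z1, z2, z3, h4, h5, h6, h7]] at h
    exact h
  have T0_7 : HasSum (fun i : ℕ => P (i+7)) (S0 - 47/486) := by
    have h := (hasSum_nat_add_iff' (f := P) 7).mpr hS0
    rw [show (∑ i ∈ Finset.range 7, P i) = 47/486 from by
      norm_num [Finset.sum_range_succ, z0, z1, z2, z3, h4, h5, h6]] at h
    exact h
  have T0_6 : HasSum (fun i : ℕ => P (i+6)) (S0 - 17/324) := by
    have h := (hasSum_nat_add_iff' (f := P) 6).mpr hS0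
    rw [show (∑ i ∈ Finset.range 6, P i) = 17/324 from by
      norm_num [Finset.sum_range_succ, z0, z1, z2, z3, h4, h5]] at h
    exact h
  have T0_5 : HasSum (fun i : ℕ => P (i+5)) (S0 - 1/54) := by
    have h := (hasSum_nat_add_iff' (f := P) 5).mpr hS0
    rw [show (∑ i ∈ Finset.range 5, P i) = 1/54 from by
      norm_num [Finset.sum_range_succ, z0, z1, z2, z3, h4]] at h
    exact h
  have T0_4 : HasSum (fun i : ℕ => P (i+4)) S0 := by
    have h := (hasSum_nat_add_iff' (f := P) 4).mpr hS0
    rw [show (∑ i ∈ Finset.range 4, P i) = 0 from by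
      norm_num [Finset.sum_range_succ, z0, z1, z2, z3], sub_zero] at h
    exact h
  have T1_8 : HasSum (fun i : ℕ => ((i+8 : ℕ):ℝ) * P (i+8)) (S1 - 1655/1944) := by
    have h := (hasSum_nat_add_iff' (f := fun N : ℕ => (N:ℝ) * P N) 8).mpr hS1
    rw [show (∑ i ∈ Finset.range 8, ((i:ℝ) * P i)) = 1655/1944 from by
      norm_num [Finset.sum_range_succ, z0, z1, z2, z3, h4, h5, h6, h7]] at h
    exact h
  have T1_7 : HasSum (fun i : ℕ => ((i+7 : ℕ):ℝ) * P (i+7)) (S1 - 55/108) := by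
    have h := (hasSum_nat_add_iff' (f := fun N : ℕ => (N:ℝ) * P N) 7).mpr hS1
    rw [show (∑ i ∈ Finset.range 7, ((i:ℝ) * P i)) = 55/108 from by
      norm_num [Finset.sum_range_succ, z0, z1, z2, z3, h4, h5, h6]] at h
    exact h
  have T1_6 : HasSum (fun i : ℕ => ((i+6 : ℕ):ℝ) * P (i+6)) (S1 - 79/324) := by
    have h := (hasSum_nat_add_iff' (f := fun N : ℕ => (N:ℝ) * P N) 6).mpr hS1
    rw [show (∑ i ∈ Finset.range 6, ((i:ℝ) * P i)) = 79/324 from by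
      norm_num [Finset.sum_range_succ, z0, z1, z2, z3, h4, h5]] at h
    exact h
  have T1_5 : HasSum (fun i : ℕ => ((i+5 : ℕ):ℝ) * P (i+5)) (S1 - 2/27) := by
    have h := (hasSum_nat_add_iff' (f := fun N : ℕ => (N:ℝ) * P N) 5).mpr hS1
    rw [show (∑ i ∈ Finset.range 5, ((i:ℝ) * P i)) = 2/27 from by
      norm_num [Finset.sum_range_succ, z0, z1, z2, z3, h4]] at h
    exact h
  have T1_4 : HasSum (fun i : ℕ => ((i+4 : ℕ):ℝ) * P (i+4)) S1 := by
    have h := (hasSum_nat_add_iff' (f := fun N : ℕ => (N:ℝ) * P N) 4).mpr hS1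
    rw [show (∑ i ∈ Finset.range 4, ((i:ℝ) * P i)) = 0 from by
      norm_num [Finset.sum_range_succ, z0, z1, z2, z3], sub_zero] at h
    exact h
  have T2_8 : HasSum (fun i : ℕ => ((i+8 : ℕ):ℝ)^2 * P (i+8)) (S2 - 9977/1944) := by
    have h := (hasSum_nat_add_iff' (f := fun N : ℕ => (N:ℝ)^2 * P N) 8).mpr hS2
    rw [show (∑ i ∈ Finset.range 8, ((i:ℝ)^2 * P i)) = 9977/1944 from by
      norm_num [Finset.sum_range_succ, z0, z1, z2, z3, h4, h5, h6, h7]] at h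
    exact h
  have T2_7 : HasSum (fun i : ℕ => ((i+7 : ℕ):ℝ)^2 * P (i+7)) (S2 - 887/324) := by
    have h := (hasSum_nat_add_iff' (f := fun N : ℕ => (N:ℝ)^2 * P N) 7).mpr hS2
    rw [show (∑ i ∈ Finset.range 7, ((i:ℝ)^2 * P i)) = 887/324 from by
      norm_num [Finset.sum_range_succ, z0, z1, z2, z3, h4, h5, h6]] at h
    exact h
  have T2_6 : HasSum (fun i : ℕ => ((i+6 : ℕ):ℝ)^2 * P (i+6)) (S2 - 371/324) := by
    have h := (hasSum_nat_add_iff' (f := fun N : ℕ => (N:ℝ)^2 * P N) 6).mpr hS2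
    rw [show (∑ i ∈ Finset.range 6, ((i:ℝ)^2 * P i)) = 371/324 from by
      norm_num [Finset.sum_range_succ, z0, z1, z2, z3, h4, h5]] at h
    exact h
  have T2_5 : HasSum (fun i : ℕ => ((i+5 : ℕ):ℝ)^2 * P (i+5)) (S2 - 8/27) := by
    have h := (hasSum_nat_add_iff' (f := fun N : ℕ => (N:ℝ)^2 * P N) 5).mpr hS2
    rw [show (∑ i ∈ Finset.range 5, ((i:ℝ)^2 * P i)) = 8/27 from by
      norm_num [Finset.sum_range_succ, z0, z1, z2, z3, h4]] at h
    exact h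
  have T2_4 : HasSum (fun i : ℕ => ((i+4 : ℕ):ℝ)^2 * P (i+4)) S2 := by
    have h := (hasSum_nat_add_iff' (f := fun N : ℕ => (N:ℝ)^2 * P N) 4).mpr hS2
    rw [show (∑ i ∈ Finset.range 4, ((i:ℝ)^2 * P i)) = 0 from by
      norm_num [Finset.sum_range_succ, z0, z1, z2, z3], sub_zero] at h
    exact h
  -- index rewrites
  have idx : ∀ i : ℕ, i + 8 - 1 = i + 7 ∧ i + 8 - 2 = i + 6 ∧ i + 8 - 3 = i + 5 ∧
      i + 8 - 4 = i + 4 := fun i => by omega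
  -- equation 0
  have funeq0 : (fun i : ℕ => P (i+8)) = (fun i : ℕ =>
      (5/6) * P (i+7) - (1/18) * P (i+6) + (1/6) * P (i+5) - (1/36) * P (i+4)
        + (1/16) * srcQ (i+8)) := by
    funext i
    have h := hrecQ (i+8) (by omega)
    rw [(idx i).1, (idx i).2.1, (idx i).2.2.1, (idx i).2.2.2] at h
    exact h
  have E0 := T0_8.unique (by
    rw [funeq0]
    exact ((((T0_7.mul_left (5/6)).sub (T0_6.mul_left (1/18))).add
      (T0_5.mul_left (1/6))).sub (T0_4.mul_left (1/36))).add (FQ0.mul_left (1/16)))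
  -- equation 1
  have funeq1 : (fun i : ℕ => ((i+8 : ℕ):ℝ) * P (i+8)) = (fun i : ℕ =>
      (5/6) * (((i+7 : ℕ):ℝ) * P (i+7) + P (i+7))
      - (1/18) * (((i+6 : ℕ):ℝ) * P (i+6) + 2 * P (i+6))
      + (1/6) * (((i+5 : ℕ):ℝ) * P (i+5) + 3 * P (i+5))
      - (1/36) * (((i+4 : ℕ):ℝ) * P (i+4) + 4 * P (i+4))
      + (1/16) * (((i+8 : ℕ):ℝ) * srcQ (i+8))) := by
    funext i
    have h := hrecQ (i+8) (by omega)
    rw [(idx i).1, (idx i).2.1, (idx i).2.2.1, (idx i).2.2.2] at h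
    rw [h]
    push_cast
    ring
  have E1 := T1_8.unique (by
    rw [funeq1]
    exact (((((T1_7.add T0_7).mul_left (5/6)).sub
      ((T1_6.add (T0_6.mul_left 2)).mul_left (1/18))).add
      ((T1_5.add (T0_5.mul_left 3)).mul_left (1/6))).sub
      ((T1_4.add (T0_4.mul_left 4)).mul_left (1/36))).add (FQ1.mul_left (1/16)))
  -- equation 2
  have funeq2 : (fun i : ℕ => ((i+8 : ℕ):ℝ)^2 * P (i+8)) = (fun i : ℕ =>
      (5/6) * (((i+7 : ℕ):ℝ)^2 * P (i+7) + (2 * (((i+7 : ℕ):ℝ) * P (i+7)) + P (i+7)))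
      - (1/18) * (((i+6 : ℕ):ℝ)^2 * P (i+6) + (4 * (((i+6 : ℕ):ℝ) * P (i+6)) + 4 * P (i+6)))
      + (1/6) * (((i+5 : ℕ):ℝ)^2 * P (i+5) + (6 * (((i+5 : ℕ):ℝ) * P (i+5)) + 9 * P (i+5)))
      - (1/36) * (((i+4 : ℕ):ℝ)^2 * P (i+4) + (8 * (((i+4 : ℕ):ℝ) * P (i+4)) + 16 * P (i+4)))
      + (1/16) * (((i+8 : ℕ):ℝ)^2 * srcQ (i+8))) := by
    funext i
    have h := hrecQ (i+8) (by omega)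
    rw [(idx i).1, (idx i).2.1, (idx i).2.2.1, (idx i).2.2.2] at h
    rw [h]
    push_cast
    ring
  have E2 := T2_8.unique (by
    rw [funeq2]
    exact (((((T2_7.add ((T1_7.mul_left 2).add T0_7)).mul_left (5/6)).sub
      ((T2_6.add ((T1_6.mul_left 4).add (T0_6.mul_left 4))).mul_left (1/18))).add
      ((T2_5.add ((T1_5.mul_left 6).add (T0_5.mul_left 9))).mul_left (1/6))).sub
      ((T2_4.add ((T1_4.mul_left 8).add (T0_4.mul_left 16))).mul_left (1/36))).add
      (FQ2.mul_left (1/16)))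
  have v0 : S0 = 1 := by linarith
  have v1 : S1 = 941/48 := by linarith
  have v2 : S2 = 84547/144 := by linarith
  refine ⟨v0 ▸ hS0, v1 ▸ hS1, ?_⟩
  rw [show (51919/256 + (941/48)^2 : ℝ) = 84547/144 from by norm_num]
  exact v2 ▸ hS2
end

section
/- Fix a real number C > 0 and define the rational functions of a real variable x: H̲*(x) = C^2*x^3/(2*(1+C)*(1+C^2)) + C*x^5/(2*(1+C)^2*(2-x^2)), T̲*(x) = C*x^2/(1+C) + x^3/(2*(1+C)*(1+C^2)) + x^4/(2*(1+C)^2*(2-x)), H(x) = x^2/3 + 2*C*x^4/(3*(1+C)*(2-x^2)), T(x) = 2*x^3/(3*(1+C)*(2-x)), and G(x) = (H(x)+T(x)) * H̲*(x) / (1 - T̲*(x)). Then 1 - T̲*(1) ≠ 0, G(1) = 1, the derivative of G at x = 1 equals m(C) = 2*(6*C^5 + 41*C^4 + 56*C^3 + 51*C^2 + 38*C + 12) / (3*C*(C+1)*(2*C^2 + C + 1)), and m(C)/C tends to 2 as C → ∞. -/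
/-!
At `x = 1` the numerator factor `H̲*(1)` coincides with the denominator `1 - T̲*(1)`, both
being `C(2C² + C + 1)/(2(1 + C)²(1 + C²))`, while `H(1) + T(1) = 1`; hence `G(1) = 1`. Whenever
`f(1) = 1` and `g(1) = 1 - k(1)`, the quotient rule collapses to
`(f g / (1 - k))'(1) = f'(1) + (g'(1) + k'(1)) / g(1)`, and evaluating the derivatives of the
four rational functions at `1` gives `m(C)`. Substituting `t = 1/c` turns `m(c)/c` into a
rational function continuous at `t = 0` with value `2`.
-/

open Filter Topology

theorem HasDerivAt.mul_div_one_sub {𝕜 : Type*} [NontriviallyNormedField 𝕜] {f g k : 𝕜 → 𝕜}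
    {f' g' k' a : 𝕜} (hf : HasDerivAt f f' a) (hg : HasDerivAt g g' a) (hk : HasDerivAt k k' a)
    (hfa : f a = 1) (hga : g a = 1 - k a) (hne : g a ≠ 0) :
    HasDerivAt (fun x => f x * g x / (1 - k x)) (f' + (g' + k') / g a) a := by
  refine ((hf.mul hg).div (hk.const_sub 1) (hga ▸ hne)).congr_deriv ?_
  rw [Pi.mul_apply, ← hga, hfa]
  field_simp
  ring

noncomputable section LadderGF

variable (C : ℝ)

def initHookGF (x : ℝ) : ℝ := x ^ 2 / 3 + 2 * C * x ^ 4 / (3 * (1 + C) * (2 - x ^ 2))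

def initTwistGF (x : ℝ) : ℝ := 2 * x ^ 3 / (3 * (1 + C) * (2 - x))

def oneSidedHookGF (x : ℝ) : ℝ :=
  C ^ 2 * x ^ 3 / (2 * (1 + C) * (1 + C ^ 2)) + C * x ^ 5 / (2 * (1 + C) ^ 2 * (2 - x ^ 2))

def oneSidedTwistGF (x : ℝ) : ℝ :=
  C * x ^ 2 / (1 + C) + x ^ 3 / (2 * (1 + C) * (1 + C ^ 2)) + x ^ 4 / (2 * (1 + C) ^ 2 * (2 - x))

def meanTrappingLength (c : ℝ) : ℝ :=
  2 * (6 * c ^ 5 + 41 * c ^ 4 + 56 * c ^ 3 + 51 * c ^ 2 + 38 * c + 12) /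
    (3 * c * (c + 1) * (2 * c ^ 2 + c + 1))

variable {C}

theorem initHookGF_one_add_initTwistGF_one (hC : 1 + C ≠ 0) :
    initHookGF C 1 + initTwistGF C 1 = 1 := by
  simp only [initHookGF, initTwistGF]
  field_simp
  ring

theorem one_sub_oneSidedTwistGF_one (hC : 1 + C ≠ 0) :
    1 - oneSidedTwistGF C 1 = C * (2 * C ^ 2 + C + 1) / (2 * (1 + C) ^ 2 * (1 + C ^ 2)) := by
  simp only [oneSidedTwistGF]
  field_simp
  ring

theorem oneSidedHookGF_one (hC : 1 + C ≠ 0) :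
    oneSidedHookGF C 1 = 1 - oneSidedTwistGF C 1 := by
  rw [one_sub_oneSidedTwistGF_one hC, oneSidedHookGF]
  field_simp
  ring

theorem hasDerivAt_initHookGF (hC : 1 + C ≠ 0) :
    HasDerivAt (initHookGF C) (2 / 3 + 4 * C / (1 + C)) 1 := by
  have h := ((hasDerivAt_pow 2 (1 : ℝ)).div_const 3).add
    (((hasDerivAt_pow 4 (1 : ℝ)).const_mul (2 * C)).div
      (((hasDerivAt_pow 2 (1 : ℝ)).const_sub 2).const_mul (3 * (1 + C))) (by norm_num [hC]))
  refine h.congr_deriv ?_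
  norm_num
  field_simp
  ring

theorem hasDerivAt_initTwistGF (hC : 1 + C ≠ 0) :
    HasDerivAt (initTwistGF C) (8 / (3 * (1 + C))) 1 := by
  have h := ((hasDerivAt_pow 3 (1 : ℝ)).const_mul 2).div
    (((hasDerivAt_id (1 : ℝ)).const_sub 2).const_mul (3 * (1 + C))) (by norm_num [hC])
  refine h.congr_deriv ?_
  norm_num
  field_simp
  ring

theorem hasDerivAt_oneSidedHookGF (hC : 1 + C ≠ 0) :
    HasDerivAt (oneSidedHookGF C)
      (3 * C ^ 2 / (2 * (1 + C) * (1 + C ^ 2)) + 7 * C / (2 * (1 + C) ^ 2)) 1 := by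
  have h := (((hasDerivAt_pow 3 (1 : ℝ)).const_mul (C ^ 2)).div_const
      (2 * (1 + C) * (1 + C ^ 2))).add
    (((hasDerivAt_pow 5 (1 : ℝ)).const_mul C).div
      (((hasDerivAt_pow 2 (1 : ℝ)).const_sub 2).const_mul (2 * (1 + C) ^ 2)) (by norm_num [hC]))
  refine h.congr_deriv ?_
  norm_num
  field_simp
  ring

theorem hasDerivAt_oneSidedTwistGF (hC : 1 + C ≠ 0) :
    HasDerivAt (oneSidedTwistGF C)
      (2 * C / (1 + C) + 3 / (2 * (1 + C) * (1 + C ^ 2)) + 5 / (2 * (1 + C) ^ 2)) 1 := by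
  have h := ((((hasDerivAt_pow 2 (1 : ℝ)).const_mul C).div_const (1 + C)).add
      ((hasDerivAt_pow 3 (1 : ℝ)).div_const (2 * (1 + C) * (1 + C ^ 2)))).add
    ((hasDerivAt_pow 4 (1 : ℝ)).div
      (((hasDerivAt_id (1 : ℝ)).const_sub 2).const_mul (2 * (1 + C) ^ 2)) (by norm_num [hC]))
  refine h.congr_deriv ?_
  norm_num
  field_simp
  ring

end LadderGF

theorem tendsto_meanTrappingLength_div_atTop :
    Tendsto (fun c => meanTrappingLength c / c) atTop (𝓝 2) := by
  have hcont : ContinuousAt (fun t : ℝ =>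
      2 * (6 + 41 * t + 56 * t ^ 2 + 51 * t ^ 3 + 38 * t ^ 4 + 12 * t ^ 5) /
        (3 * (1 + t) * (2 + t + t ^ 2))) 0 :=
    ContinuousAt.div (by fun_prop) (by fun_prop) (by norm_num)
  have h := hcont.tendsto.comp tendsto_inv_atTop_zero
  norm_num at h
  refine h.congr' ?_
  filter_upwards [eventually_gt_atTop 0] with c hc
  simp only [Function.comp_apply, meanTrappingLength]
  field_simp

/-- For the nearest-neighbor self-attraction GSAW with weight `C > 0` on the two-sided
square ladder, the trapping-length generating function `G = (H + T)·H̲*/(1 - T̲*)` is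
well defined at `x = 1`, where it equals 1 (the walk is trapped with probability 1); its
derivative at `x = 1` is the mean trapping length
`m(C) = 2(6C^5+41C^4+56C^3+51C^2+38C+12)/(3C(C+1)(2C^2+C+1))`, and `m(C) ~ 2C` as
`C → ∞`. -/
theorem biased_trapping_length_two_sided_square (C : ℝ) (hC : 0 < C)
    (Hb Tb H T G m : ℝ → ℝ)
    (hHb : ∀ x : ℝ, Hb x = C ^ 2 * x ^ 3 / (2 * (1 + C) * (1 + C ^ 2)) +
      C * x ^ 5 / (2 * (1 + C) ^ 2 * (2 - x ^ 2)))
    (hTb : ∀ x : ℝ, Tb x = C * x ^ 2 / (1 + C) +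
      x ^ 3 / (2 * (1 + C) * (1 + C ^ 2)) + x ^ 4 / (2 * (1 + C) ^ 2 * (2 - x)))
    (hH : ∀ x : ℝ, H x = x ^ 2 / 3 + 2 * C * x ^ 4 / (3 * (1 + C) * (2 - x ^ 2)))
    (hT : ∀ x : ℝ, T x = 2 * x ^ 3 / (3 * (1 + C) * (2 - x)))
    (hG : ∀ x : ℝ, G x = (H x + T x) * Hb x / (1 - Tb x))
    (hm : ∀ c : ℝ, m c = 2 * (6 * c ^ 5 + 41 * c ^ 4 + 56 * c ^ 3 + 51 * c ^ 2 +
      38 * c + 12) / (3 * c * (c + 1) * (2 * c ^ 2 + c + 1))) :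
    1 - Tb 1 ≠ 0 ∧
    G 1 = 1 ∧
    deriv G 1 = m C ∧
    Filter.Tendsto (fun c : ℝ => m c / c) Filter.atTop (nhds 2) := by
  obtain rfl : Hb = oneSidedHookGF C := funext hHb
  obtain rfl : Tb = oneSidedTwistGF C := funext hTb
  obtain rfl : H = initHookGF C := funext hH
  obtain rfl : T = initTwistGF C := funext hT
  obtain rfl : m = meanTrappingLength := funext hm
  obtain rfl := funext hG
  have hC1 : 1 + C ≠ 0 := by positivity
  have hdenom : 1 - oneSidedTwistGF C 1 ≠ 0 := by
    rw [one_sub_oneSidedTwistGF_one hC1]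
    positivity
  have hnum := initHookGF_one_add_initTwistGF_one hC1
  have hHb1 := oneSidedHookGF_one hC1
  refine ⟨hdenom, by simp only [hnum, hHb1, one_mul, div_self hdenom], ?_,
    tendsto_meanTrappingLength_div_atTop⟩
  rw [(HasDerivAt.mul_div_one_sub (f := fun x => initHookGF C x + initTwistGF C x)
      ((hasDerivAt_initHookGF hC1).add (hasDerivAt_initTwistGF hC1))
      (hasDerivAt_oneSidedHookGF hC1) (hasDerivAt_oneSidedTwistGF hC1) hnum hHb1
      (hHb1 ▸ hdenom)).deriv, hHb1, one_sub_oneSidedTwistGF_one hC1, meanTrappingLength]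
  field_simp
  ring
end
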